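/- arXiv:2309.00060 — 4 statements merged into one kernel-verified Lean document; each statement's English description precedes it below -/
import Mathlib

section
/- Fix d ≥ 1, α ∈ [0,1) and β > 0 (with β < 1 if α = 0), and for each n ≥ d set λ(n) := 1 − β·n^{−α}. For each n let π_n be a stationary distribution of the greedy full-access chain with parameters n, d, λ(n), let P_b(n) := E_{π_n}[1(I(X) = 0)] and E[D_n] := E_{π_n}[Σ_{i=1}^d X_i] / (n·λ(n)·(1 − P_b(n))). Then there exist a constant C > 0 and N such that for all n ≥ N: P_b(n) ≤ C·n^{−1/2} and |E[D_n] − 1/d| ≤ C·n^{−1}. That is, the blocking probability converges to zero at rate O(1/√n) and the mean response time of accepted jobs converges to 1/d at rate O(1/n). (Theorem 1.) -/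
open Finset

/-- `busy d X` is the number of busy servers in state `X`, where `X i`
(for `1 ≤ i ≤ d`) is the number of jobs being processed on `i` servers
simultaneously (coordinate `0` is unused). -/
def busy (d : ℕ) (X : Fin (d + 1) → ℕ) : ℕ :=
  ∑ i : Fin (d + 1), i.1 * X i

/-- The finite state space `S`: coordinate `0` is zero and at most `n` servers busy. -/
def stateSpace (n d : ℕ) : Finset (Fin (d + 1) → ℕ) :=
  (Fintype.piFinset fun _ : Fin (d + 1) => Finset.range (n + 1)).filter
    fun X => busy d X ≤ n ∧ X 0 = 0

/-- Expectation of `g` under a measure `π` supported on the state space. -/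
noncomputable def expec (n d : ℕ) (π g : (Fin (d + 1) → ℕ) → ℝ) : ℝ :=
  ∑ X ∈ stateSpace n d, π X * g X

/-- `π` is a probability distribution on the state space. -/
def IsProbOn (n d : ℕ) (π : (Fin (d + 1) → ℕ) → ℝ) : Prop :=
  (∀ X, 0 ≤ π X) ∧ (∑ X ∈ stateSpace n d, π X = 1) ∧
    ∀ X, X ∉ stateSpace n d → π X = 0

/-- Total number of jobs `∑_{i=1}^d X_i` in state `X`. -/
def jobs (d : ℕ) (X : Fin (d + 1) → ℕ) : ℕ :=
  ∑ i : Fin (d + 1), if 0 < i.1 then X i else 0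

/-- Number of jobs occupying fewer than `d` servers, `∑_{i=1}^{d-1} X_i`. -/
def jobsLow (d : ℕ) (X : Fin (d + 1) → ℕ) : ℕ :=
  ∑ i : Fin (d + 1), if 0 < i.1 ∧ i.1 < d then X i else 0

/-- Sampling probabilities `A_i(X)` for `0 ≤ i ≤ d`: for `i < d`, the hypergeometric
probability `C(I,i)·C(B,k−i)/C(n,k)` that exactly `i` of the `k` uniformly sampled
servers are idle; for `i = d`, the probability `1 − ∑_{j<d} A_j(X)` that at least `d`
sampled servers are idle. -/
noncomputable def Asamp (n d k : ℕ) (X : Fin (d + 1) → ℕ) (i : ℕ) : ℝ :=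
  if i < d then
    ((n - busy d X).choose i * (busy d X).choose (k - i) : ℝ) / (n.choose k : ℝ)
  else
    1 - ∑ j ∈ Finset.range d,
        ((n - busy d X).choose j * (busy d X).choose (k - j) : ℝ) / (n.choose k : ℝ)

/-- Generator of the greedy limited-access chain:
`G f(X) = nλ·∑_{i=1}^d A_i(X)·(f(X+e_i) − f(X)) + ∑_{i=1}^d i·X_i·(f(X−e_i) − f(X))`. -/
noncomputable def Glim (n d k : ℕ) (lam : ℝ) (f : (Fin (d + 1) → ℕ) → ℝ)
    (X : Fin (d + 1) → ℕ) : ℝ :=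
  (n : ℝ) * lam * ∑ i : Fin (d + 1),
      (if i.1 = 0 then 0 else Asamp n d k X i.1) * (f (X + Pi.single i 1) - f X) +
    ∑ i : Fin (d + 1), (i.1 * X i : ℝ) * (f (X - Pi.single i 1) - f X)

/-- `π` is a stationary distribution of the greedy limited-access chain. -/
def IsStationaryLim (n d k : ℕ) (lam : ℝ) (π : (Fin (d + 1) → ℕ) → ℝ) : Prop :=
  ∀ f : (Fin (d + 1) → ℕ) → ℝ, ∑ X ∈ stateSpace n d, π X * Glim n d k lam f X = 0

/-- Generator of the greedy full-access chain (the case `k = n`):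
`G f(X) = nλ·[1(I(X) ≥ d)·(f(X+e_d) − f(X)) + ∑_{j=1}^{d−1} 1(I(X) = j)·(f(X+e_j) − f(X))]
  + ∑_{i=1}^d i·X_i·(f(X−e_i) − f(X))`, where `I(X) = n − busy d X`. -/
noncomputable def Gfull (n d : ℕ) (lam : ℝ) (f : (Fin (d + 1) → ℕ) → ℝ)
    (X : Fin (d + 1) → ℕ) : ℝ :=
  (n : ℝ) * lam *
      ((if d ≤ n - busy d X then (1 : ℝ) else 0) *
          (f (X + Pi.single (Fin.last d) 1) - f X) +
        ∑ j : Fin (d + 1),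
          (if 0 < j.1 ∧ j.1 < d ∧ n - busy d X = j.1 then (1 : ℝ) else 0) *
            (f (X + Pi.single j 1) - f X)) +
    ∑ i : Fin (d + 1), (i.1 * X i : ℝ) * (f (X - Pi.single i 1) - f X)

/-- `π` is a stationary distribution of the greedy full-access chain. -/
def IsStationaryFull (n d : ℕ) (lam : ℝ) (π : (Fin (d + 1) → ℕ) → ℝ) : Prop :=
  ∀ f : (Fin (d + 1) → ℕ) → ℝ, ∑ X ∈ stateSpace n d, π X * Gfull n d lam f X = 0


namespace Stmt9Aux

variable {d : ℕ}

/-- generic coordinate sum -/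
def csum {M : Type*} [AddCommMonoid M] (g : Fin (d+1) → ℕ → M) (X : Fin (d+1) → ℕ) : M :=
  ∑ i : Fin (d+1), g i (X i)

lemma add_single_eq_update (X : Fin (d+1) → ℕ) (j : Fin (d+1)) :
    X + Pi.single j 1 = Function.update X j (X j + 1) := by
  funext i
  by_cases h : i = j
  · subst h; simp
  · simp [h, Pi.single_apply, Function.update_apply]

lemma sub_single_eq_update (X : Fin (d+1) → ℕ) (j : Fin (d+1)) :
    X - Pi.single j 1 = Function.update X j (X j - 1) := by
  funext i
  by_cases h : i = j
  · subst h; simp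
  · simp [h, Pi.single_apply, Function.update_apply]

lemma csum_update {M : Type*} [AddCommMonoid M] (g : Fin (d+1) → ℕ → M)
    (X : Fin (d+1) → ℕ) (j : Fin (d+1)) (v : ℕ) :
    csum g (Function.update X j v) + g j (X j) = csum g X + g j v := by
  classical
  unfold csum
  rw [Finset.sum_eq_sum_sdiff_singleton_add (Finset.mem_univ j)
    (fun i => g i (Function.update X j v i)),
    Finset.sum_eq_sum_sdiff_singleton_add (Finset.mem_univ j) (fun i => g i (X i))]
  have : ∀ i ∈ Finset.univ \ {j}, g i (Function.update X j v i) = g i (X i) := by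
    intro i hi
    rcases Finset.mem_sdiff.mp hi with ⟨-, hij⟩
    rw [Function.update_of_ne (Finset.notMem_singleton.mp hij)]
  rw [Finset.sum_congr rfl this, Function.update_self]
  abel

lemma busy_eq_csum (X : Fin (d+1) → ℕ) : busy d X = csum (fun i t => i.1 * t) X := rfl

lemma jobs_eq_csum (X : Fin (d+1) → ℕ) :
    jobs d X = csum (fun i t => if 0 < i.1 then t else 0) X := rfl

lemma jobsLow_eq_csum (X : Fin (d+1) → ℕ) :
    jobsLow d X = csum (fun i t => if 0 < i.1 ∧ i.1 < d then t else 0) X := rfl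

lemma busy_add_single (X : Fin (d+1) → ℕ) (j : Fin (d+1)) :
    busy d (X + Pi.single j 1) = busy d X + j.1 := by
  rw [add_single_eq_update, busy_eq_csum, busy_eq_csum X]
  have := csum_update (fun (i : Fin (d+1)) (t : ℕ) => i.1 * t) X j (X j + 1)
  simp only [Nat.mul_add, Nat.mul_one] at this
  omega

lemma busy_sub_single (X : Fin (d+1) → ℕ) (j : Fin (d+1)) (h : 0 < X j) :
    busy d (X - Pi.single j 1) + j.1 = busy d X := by
  rw [sub_single_eq_update, busy_eq_csum, busy_eq_csum X]
  have := csum_update (fun (i : Fin (d+1)) (t : ℕ) => i.1 * t) X j (X j - 1)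
  have h3 : X j - 1 + 1 = X j := Nat.succ_pred_eq_of_pos h
  have h2 : (j.1 : ℕ) * (X j - 1) + j.1 = j.1 * X j := by
    calc (j.1 : ℕ) * (X j - 1) + j.1 = j.1 * ((X j - 1) + 1) := by ring
    _ = j.1 * X j := by rw [h3]
  omega

lemma single_term_le_busy (X : Fin (d+1) → ℕ) (j : Fin (d+1)) : j.1 * X j ≤ busy d X :=
  Finset.single_le_sum (f := fun i => i.1 * X i) (fun _ _ => Nat.zero_le _) (Finset.mem_univ j)

lemma mem_stateSpace_iff {n : ℕ} {X : Fin (d+1) → ℕ} :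
    X ∈ stateSpace n d ↔ busy d X ≤ n ∧ X 0 = 0 := by
  constructor
  · intro h; exact (Finset.mem_filter.mp h).2
  · intro h
    refine Finset.mem_filter.mpr ⟨?_, h⟩
    rw [Fintype.mem_piFinset]
    intro i
    rw [Finset.mem_range]
    rcases Nat.eq_zero_or_pos i.1 with h0 | h0
    · have : i = 0 := by ext; exact h0
      rw [this, h.2]; omega
    · have := single_term_le_busy X i
      have : X i ≤ busy d X := le_trans (Nat.le_mul_of_pos_left _ h0) this
      omega

end Stmt9Aux

namespace Stmt9Aux

variable {n d : ℕ}

lemma sub_single_self (X : Fin (d+1) → ℕ) (i : Fin (d+1)) (h : X i = 0) :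
    X - Pi.single i 1 = X := by
  rw [sub_single_eq_update]
  simp [h]

lemma death_mem (X : Fin (d+1) → ℕ) (i : Fin (d+1)) (hX : X ∈ stateSpace n d) :
    X - Pi.single i 1 ∈ stateSpace n d := by
  rcases Nat.eq_zero_or_pos (X i) with h | h
  · rwa [sub_single_self X i h]
  · rw [mem_stateSpace_iff] at hX ⊢
    constructor
    · have := busy_sub_single X i h
      omega
    · rw [sub_single_eq_update, Function.update_apply]
      split_ifs with h0
      · subst h0; omega
      · exact hX.2

lemma arrival_last_mem (X : Fin (d+1) → ℕ) (hd : 1 ≤ d) (hX : X ∈ stateSpace n d)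
    (h : d ≤ n - busy d X) : X + Pi.single (Fin.last d) 1 ∈ stateSpace n d := by
  rw [mem_stateSpace_iff] at hX ⊢
  constructor
  · rw [busy_add_single]
    have : (Fin.last d).1 = d := rfl
    omega
  · rw [add_single_eq_update, Function.update_apply]
    split_ifs with h0
    · exfalso
      have h00 := congrArg Fin.val h0
      simp [Fin.last] at h00
      omega
    · exact hX.2

lemma arrival_low_mem (X : Fin (d+1) → ℕ) (j : Fin (d+1)) (hX : X ∈ stateSpace n d)
    (h1 : 0 < j.1) (h3 : n - busy d X = j.1) : X + Pi.single j 1 ∈ stateSpace n d := by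
  rw [mem_stateSpace_iff] at hX ⊢
  constructor
  · rw [busy_add_single]; omega
  · rw [add_single_eq_update, Function.update_apply]
    split_ifs with h0
    · exfalso
      have h00 := congrArg Fin.val h0
      simp at h00
      omega
    · exact hX.2

lemma Gfull_eval (lam : ℝ) (f : (Fin (d+1) → ℕ) → ℝ) (X : Fin (d+1) → ℕ) :
    Gfull n d lam f X
      = (n:ℝ) * lam *
          ((if d ≤ n - busy d X then f (X + Pi.single (Fin.last d) 1) - f X else 0)
            + (if h : 0 < n - busy d X ∧ n - busy d X < d then
                 f (X + Pi.single ⟨n - busy d X, by omega⟩ 1) - f X else 0))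
        + ∑ i : Fin (d+1), (i.1 * X i : ℝ) * (f (X - Pi.single i 1) - f X) := by
  have e1 : (if d ≤ n - busy d X then (1:ℝ) else 0) *
      (f (X + Pi.single (Fin.last d) 1) - f X)
      = if d ≤ n - busy d X then f (X + Pi.single (Fin.last d) 1) - f X else 0 := by
    split_ifs with h
    · rw [one_mul]
    · rw [zero_mul]
  have e2 : (∑ j : Fin (d+1), (if 0 < j.1 ∧ j.1 < d ∧ n - busy d X = j.1 then (1:ℝ) else 0) *
      (f (X + Pi.single j 1) - f X))
      = if h : 0 < n - busy d X ∧ n - busy d X < d then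
          f (X + Pi.single ⟨n - busy d X, by omega⟩ 1) - f X else 0 := by
    by_cases hc : 0 < n - busy d X ∧ n - busy d X < d
    · rw [dif_pos hc]
      have hlt : n - busy d X < d + 1 := by omega
      rw [Finset.sum_eq_single (⟨n - busy d X, hlt⟩ : Fin (d+1))]
      · rw [if_pos ⟨hc.1, hc.2, rfl⟩, one_mul]
      · intro j _ hj
        rw [if_neg, zero_mul]
        rintro ⟨-, -, hj3⟩
        exact hj (Fin.ext (by simp only [Fin.val_mk]; omega))
      · intro habs; exact absurd (Finset.mem_univ _) habs
    · rw [dif_neg hc]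
      apply Finset.sum_eq_zero
      intro j _
      rw [if_neg, zero_mul]
      rintro ⟨hj1, hj2, hj3⟩
      exact hc ⟨by omega, by omega⟩
  unfold Gfull
  rw [e1, e2]

end Stmt9Aux

namespace Stmt9Aux

variable {n d : ℕ}

/-- low busy servers, ℕ -/
def lowBusy (d : ℕ) (X : Fin (d+1) → ℕ) : ℕ :=
  ∑ i : Fin (d+1), if 0 < i.1 ∧ i.1 < d then i.1 * X i else 0

/-- sum of X i / i -/
noncomputable def fInv (d : ℕ) (X : Fin (d+1) → ℕ) : ℝ :=
  ∑ i : Fin (d+1), if 0 < i.1 then (X i : ℝ) / (i.1 : ℝ) else 0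

lemma jobsLow_add_single (X : Fin (d+1) → ℕ) (j : Fin (d+1)) :
    jobsLow d (X + Pi.single j 1)
      = jobsLow d X + (if 0 < j.1 ∧ j.1 < d then 1 else 0) := by
  rw [add_single_eq_update, jobsLow_eq_csum, jobsLow_eq_csum]
  have := csum_update (fun (i : Fin (d+1)) (t : ℕ) => if 0 < i.1 ∧ i.1 < d then t else 0)
    X j (X j + 1)
  split_ifs at this ⊢ <;> omega

lemma jobsLow_sub_single (X : Fin (d+1) → ℕ) (j : Fin (d+1)) (h : 0 < X j) :
    jobsLow d (X - Pi.single j 1) + (if 0 < j.1 ∧ j.1 < d then 1 else 0)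
      = jobsLow d X := by
  rw [sub_single_eq_update, jobsLow_eq_csum, jobsLow_eq_csum]
  have := csum_update (fun (i : Fin (d+1)) (t : ℕ) => if 0 < i.1 ∧ i.1 < d then t else 0)
    X j (X j - 1)
  split_ifs at this ⊢ <;> omega

lemma jobs_sub_single (X : Fin (d+1) → ℕ) (j : Fin (d+1)) (h : 0 < X j) (hj : 0 < j.1) :
    jobs d (X - Pi.single j 1) + 1 = jobs d X := by
  rw [sub_single_eq_update, jobs_eq_csum, jobs_eq_csum]
  have := csum_update (fun (i : Fin (d+1)) (t : ℕ) => if 0 < i.1 then t else 0)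
    X j (X j - 1)
  split_ifs at this <;> omega

lemma fInv_add_single (X : Fin (d+1) → ℕ) (j : Fin (d+1)) :
    fInv d (X + Pi.single j 1)
      = fInv d X + (if 0 < j.1 then ((j.1 : ℝ))⁻¹ else 0) := by
  rw [add_single_eq_update]
  have := csum_update (M := ℝ)
    (fun (i : Fin (d+1)) (t : ℕ) => if 0 < i.1 then (t : ℝ) / (i.1 : ℝ) else 0)
    X j (X j + 1)
  have h2 : fInv d (Function.update X j (X j + 1)) = csum
    (fun (i : Fin (d+1)) (t : ℕ) => if 0 < i.1 then (t : ℝ) / (i.1 : ℝ) else 0)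
    (Function.update X j (X j + 1)) := rfl
  have h3 : fInv d X = csum
    (fun (i : Fin (d+1)) (t : ℕ) => if 0 < i.1 then (t : ℝ) / (i.1 : ℝ) else 0) X := rfl
  rw [h2, h3]
  split_ifs at this ⊢ with hj
  · have hj0 : (j.1 : ℝ) ≠ 0 := by positivity
    push_cast at this
    field_simp at this ⊢
    linarith
  · simpa using this

lemma fInv_sub_single (X : Fin (d+1) → ℕ) (j : Fin (d+1)) (h : 0 < X j) :
    fInv d (X - Pi.single j 1)
      = fInv d X - (if 0 < j.1 then ((j.1 : ℝ))⁻¹ else 0) := by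
  rw [sub_single_eq_update]
  have := csum_update (M := ℝ)
    (fun (i : Fin (d+1)) (t : ℕ) => if 0 < i.1 then (t : ℝ) / (i.1 : ℝ) else 0)
    X j (X j - 1)
  have h2 : fInv d (Function.update X j (X j - 1)) = csum
    (fun (i : Fin (d+1)) (t : ℕ) => if 0 < i.1 then (t : ℝ) / (i.1 : ℝ) else 0)
    (Function.update X j (X j - 1)) := rfl
  have h3 : fInv d X = csum
    (fun (i : Fin (d+1)) (t : ℕ) => if 0 < i.1 then (t : ℝ) / (i.1 : ℝ) else 0) X := rfl
  rw [h2, h3]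
  split_ifs at this ⊢ with hj
  · have hj0 : (j.1 : ℝ) ≠ 0 := by positivity
    have hc : ((X j - 1 : ℕ) : ℝ) = (X j : ℝ) - 1 := by
      have : (1:ℕ) ≤ X j := h
      push_cast [this]
      ring
    rw [hc] at this
    field_simp at this ⊢
    linarith
  · simpa using this

end Stmt9Aux

namespace Stmt9Aux

variable {n d : ℕ}

lemma Gfull_fLow (lam : ℝ) (X : Fin (d+1) → ℕ) :
    Gfull n d lam (fun Y => (jobsLow d Y : ℝ)) X
      = (n:ℝ) * lam * (if 0 < n - busy d X ∧ n - busy d X < d then 1 else 0)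
        - (lowBusy d X : ℝ) := by
  rw [Gfull_eval]
  have hlast : (Fin.last d).1 = d := rfl
  have e1 : (if d ≤ n - busy d X then
      ((jobsLow d (X + Pi.single (Fin.last d) 1) : ℝ) - (jobsLow d X : ℝ)) else 0) = 0 := by
    split_ifs with h
    · rw [jobsLow_add_single]
      rw [if_neg (by omega : ¬(0 < (Fin.last d).1 ∧ (Fin.last d).1 < d))]
      push_cast
      ring
    · rfl
  have e2 : (if h : 0 < n - busy d X ∧ n - busy d X < d then
        ((jobsLow d (X + Pi.single (⟨n - busy d X, by omega⟩ : Fin (d+1)) 1) : ℝ)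
          - (jobsLow d X : ℝ)) else 0)
      = (if 0 < n - busy d X ∧ n - busy d X < d then (1:ℝ) else 0) := by
    by_cases hc : 0 < n - busy d X ∧ n - busy d X < d
    · rw [dif_pos hc, if_pos hc, jobsLow_add_single]
      rw [if_pos (by simpa using hc)]
      push_cast
      ring
    · rw [dif_neg hc, if_neg hc]
  have e3 : (∑ i : Fin (d+1), (i.1 * X i : ℝ) *
        ((jobsLow d (X - Pi.single i 1) : ℝ) - (jobsLow d X : ℝ)))
      = -(lowBusy d X : ℝ) := by
    have : (lowBusy d X : ℝ)
        = ∑ i : Fin (d+1), (if 0 < i.1 ∧ i.1 < d then ((i.1 * X i : ℕ) : ℝ) else 0) := by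
      unfold lowBusy
      push_cast
      rfl
    rw [this, ← Finset.sum_neg_distrib]
    apply Finset.sum_congr rfl
    intro i _
    rcases Nat.eq_zero_or_pos (X i) with h | h
    · rw [sub_single_self X i h]
      simp [h]
    · have := jobsLow_sub_single X i h
      have hcast : (jobsLow d (X - Pi.single i 1) : ℝ)
          = (jobsLow d X : ℝ) - (if 0 < i.1 ∧ i.1 < d then 1 else 0) := by
        split_ifs at this ⊢ with hlow
        · push_cast [← this]; ring
        · push_cast [← this]; ring
      rw [hcast]
      split_ifs with hlow
      · push_cast; ring
      · push_cast; ring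
  rw [e1, e2, e3]
  ring

lemma Gfull_fInv (lam : ℝ) (hd : 1 ≤ d) (X : Fin (d+1) → ℕ) :
    Gfull n d lam (fInv d) X
      = (n:ℝ) * lam * ((if d ≤ n - busy d X then ((d:ℝ))⁻¹ else 0)
          + (if 0 < n - busy d X ∧ n - busy d X < d
              then (((n - busy d X : ℕ)):ℝ)⁻¹ else 0))
        - (jobs d X : ℝ) := by
  rw [Gfull_eval]
  have e1 : (if d ≤ n - busy d X then
      (fInv d (X + Pi.single (Fin.last d) 1) - fInv d X) else 0)
      = (if d ≤ n - busy d X then ((d:ℝ))⁻¹ else 0) := by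
    split_ifs with h
    · rw [fInv_add_single]
      rw [if_pos (by simp only [Fin.val_last]; omega : 0 < (Fin.last d).1)]
      have : ((Fin.last d).1 : ℝ) = (d : ℝ) := by norm_num [Fin.last]
      rw [this]
      ring
    · rfl
  have e2 : (if h : 0 < n - busy d X ∧ n - busy d X < d then
        (fInv d (X + Pi.single (⟨n - busy d X, by omega⟩ : Fin (d+1)) 1) - fInv d X) else 0)
      = (if 0 < n - busy d X ∧ n - busy d X < d then (((n - busy d X : ℕ)):ℝ)⁻¹ else 0) := by
    by_cases hc : 0 < n - busy d X ∧ n - busy d X < d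
    · rw [dif_pos hc, if_pos hc, fInv_add_single]
      rw [if_pos (by simpa using hc.1)]
      ring
    · rw [dif_neg hc, if_neg hc]
  have e3 : (∑ i : Fin (d+1), (i.1 * X i : ℝ) * (fInv d (X - Pi.single i 1) - fInv d X))
      = -(jobs d X : ℝ) := by
    have : (jobs d X : ℝ)
        = ∑ i : Fin (d+1), (if 0 < i.1 then ((X i : ℕ) : ℝ) else 0) := by
      unfold jobs
      push_cast
      rfl
    rw [this, ← Finset.sum_neg_distrib]
    apply Finset.sum_congr rfl
    intro i _
    rcases Nat.eq_zero_or_pos (X i) with h | h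
    · rw [sub_single_self X i h]
      simp [h]
    · rw [fInv_sub_single X i h]
      rcases Nat.eq_zero_or_pos i.1 with hi | hi
    
      · rw [if_neg (by omega), if_neg (by omega)]
        rw [hi]
        push_cast
        ring
      · rw [if_pos hi, if_pos hi]
        have hi0 : (i.1 : ℝ) ≠ 0 := by positivity
        push_cast
        field_simp
        ring
  rw [e1, e2, e3]
  ring

lemma Gfull_level (lam : ℝ) (hd : 1 ≤ d) (K : ℕ) (hK : K = 0 ∨ d ≤ K)
    (X : Fin (d+1) → ℕ) (hX : X ∈ stateSpace n d) :
    Gfull n d lam (fun Y => if n - busy d Y ≤ K then (1:ℝ) else 0) X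
      = (n:ℝ) * lam * (if K < n - busy d X ∧ n - busy d X ≤ K + d then 1 else 0)
        - ∑ i : Fin (d+1), (i.1 * X i : ℝ) *
            (if K < (n - busy d X) + i.1 ∧ n - busy d X ≤ K then 1 else 0) := by
  have hbusy : busy d X ≤ n := (mem_stateSpace_iff.mp hX).1
  rw [Gfull_eval]
  have e12 : ((if d ≤ n - busy d X then
        ((if n - busy d (X + Pi.single (Fin.last d) 1) ≤ K then (1:ℝ) else 0)
          - (if n - busy d X ≤ K then (1:ℝ) else 0)) else 0)
      + (if h : 0 < n - busy d X ∧ n - busy d X < d then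
        ((if n - busy d (X + Pi.single (⟨n - busy d X, by omega⟩ : Fin (d+1)) 1) ≤ K
            then (1:ℝ) else 0) - (if n - busy d X ≤ K then (1:ℝ) else 0)) else 0))
      = (if K < n - busy d X ∧ n - busy d X ≤ K + d then 1 else 0) := by
    by_cases h1 : d ≤ n - busy d X
    · rw [if_pos h1, dif_neg (by omega), busy_add_single]
      have hlast : (Fin.last d).1 = d := rfl
      rw [hlast]
      split_ifs <;> push_cast <;> (first | ring1 | (exfalso; omega))
    · rw [if_neg h1]
      by_cases h2 : 0 < n - busy d X ∧ n - busy d X < d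
      · rw [dif_pos h2, busy_add_single]
        have hval : (n : ℕ) - (busy d X + (⟨n - busy d X, by omega⟩ : Fin (d+1)).1) = 0 := by
          simp only [Fin.val_mk]
          omega
        rw [hval]
        rcases hK with hK0 | hKd
        · subst hK0
          rw [if_pos (by omega), if_neg (by omega), if_pos (by omega)]
          ring
        · rw [if_pos (by omega), if_pos (by omega), if_neg (by omega)]
          ring
      · rw [dif_neg h2, if_neg (by omega)]
        ring
  have e3 : (∑ i : Fin (d+1), (i.1 * X i : ℝ) *
        ((if n - busy d (X - Pi.single i 1) ≤ K then (1:ℝ) else 0)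
          - (if n - busy d X ≤ K then (1:ℝ) else 0)))
      = - ∑ i : Fin (d+1), (i.1 * X i : ℝ) *
            (if K < (n - busy d X) + i.1 ∧ n - busy d X ≤ K then 1 else 0) := by
    rw [← Finset.sum_neg_distrib]
    apply Finset.sum_congr rfl
    intro i _
    rcases Nat.eq_zero_or_pos (X i) with h | h
    · rw [sub_single_self X i h, h]
      push_cast
      ring
    · have hbs := busy_sub_single X i h
      have hterm : i.1 ≤ i.1 * X i := Nat.le_mul_of_pos_right _ h
      have hle := single_term_le_busy X i
      have hIof : n - busy d (X - Pi.single i 1) = (n - busy d X) + i.1 := by omega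
      rw [hIof]
      split_ifs <;> push_cast <;> (first | ring1 | (exfalso; omega))
  rw [e12, e3]
  ring

end Stmt9Aux

namespace Stmt9Aux

variable {n d : ℕ} {lam : ℝ} {π : (Fin (d+1) → ℕ) → ℝ}

/-- Identity from test function jobsLow : E[lowBusy] = nλ P(0 < I < d). -/
lemma ident_low (hstat : IsStationaryFull n d lam π) :
    ∑ X ∈ stateSpace n d, π X * (lowBusy d X : ℝ)
      = (n:ℝ) * lam * ∑ X ∈ stateSpace n d,
          π X * (if 0 < n - busy d X ∧ n - busy d X < d then 1 else 0) := by
  have h0 := hstat (fun Y => (jobsLow d Y : ℝ))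
  have h1 : ∀ X ∈ stateSpace n d,
      π X * Gfull n d lam (fun Y => (jobsLow d Y : ℝ)) X
        = (n:ℝ) * lam * (π X * (if 0 < n - busy d X ∧ n - busy d X < d then 1 else 0))
          - π X * (lowBusy d X : ℝ) := by
    intro X _
    rw [Gfull_fLow]
    ring
  rw [Finset.sum_congr rfl h1, Finset.sum_sub_distrib, ← Finset.mul_sum] at h0
  linarith

/-- Identity from test function fInv : E[jobs] = nλ E[cfun]. -/
lemma ident_jobs (hd : 1 ≤ d) (hstat : IsStationaryFull n d lam π) :
    ∑ X ∈ stateSpace n d, π X * (jobs d X : ℝ)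
      = (n:ℝ) * lam * ∑ X ∈ stateSpace n d,
          π X * ((if d ≤ n - busy d X then ((d:ℝ))⁻¹ else 0)
            + (if 0 < n - busy d X ∧ n - busy d X < d
                then (((n - busy d X : ℕ)):ℝ)⁻¹ else 0)) := by
  have h0 := hstat (fInv d)
  have h1 : ∀ X ∈ stateSpace n d,
      π X * Gfull n d lam (fInv d) X
        = (n:ℝ) * lam * (π X * ((if d ≤ n - busy d X then ((d:ℝ))⁻¹ else 0)
            + (if 0 < n - busy d X ∧ n - busy d X < d
                then (((n - busy d X : ℕ)):ℝ)⁻¹ else 0)))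
          - π X * (jobs d X : ℝ) := by
    intro X _
    rw [Gfull_fInv lam hd]
    ring
  rw [Finset.sum_congr rfl h1, Finset.sum_sub_distrib, ← Finset.mul_sum] at h0
  linarith

/-- Identity from level test functions. -/
lemma ident_level (hd : 1 ≤ d) (hstat : IsStationaryFull n d lam π)
    (K : ℕ) (hK : K = 0 ∨ d ≤ K) :
    (n:ℝ) * lam * ∑ X ∈ stateSpace n d,
        π X * (if K < n - busy d X ∧ n - busy d X ≤ K + d then 1 else 0)
      = ∑ X ∈ stateSpace n d, π X * (∑ i : Fin (d+1), (i.1 * X i : ℝ) *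
          (if K < (n - busy d X) + i.1 ∧ n - busy d X ≤ K then 1 else 0)) := by
  have h0 := hstat (fun Y => if n - busy d Y ≤ K then (1:ℝ) else 0)
  have h1 : ∀ X ∈ stateSpace n d,
      π X * Gfull n d lam (fun Y => if n - busy d Y ≤ K then (1:ℝ) else 0) X
        = (n:ℝ) * lam *
            (π X * (if K < n - busy d X ∧ n - busy d X ≤ K + d then 1 else 0))
          - π X * (∑ i : Fin (d+1), (i.1 * X i : ℝ) *
              (if K < (n - busy d X) + i.1 ∧ n - busy d X ≤ K then 1 else 0)) := by
    intro X hX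
    rw [Gfull_level lam hd K hK X hX]
    ring
  rw [Finset.sum_congr rfl h1, Finset.sum_sub_distrib, ← Finset.mul_sum] at h0
  linarith

end Stmt9Aux

namespace Stmt9Aux

variable {n d : ℕ}

/-- Good states: no low jobs except possibly one of class `n % d`. -/
def GoodPred (n d : ℕ) (X : Fin (d+1) → ℕ) : Prop :=
  ∀ j : Fin (d+1), 0 < j.1 → j.1 < d → (X j = 0 ∨ (j.1 = n % d ∧ X j ≤ 1))

lemma busy_split (X : Fin (d+1) → ℕ) :
    busy d X = lowBusy d X + d * X (Fin.last d) := by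
  unfold busy lowBusy
  have key : ∀ i ∈ (Finset.univ : Finset (Fin (d+1))), i.1 * X i
      = (if 0 < i.1 ∧ i.1 < d then i.1 * X i else 0)
        + (if i = Fin.last d then d * X i else 0) := by
    intro i _
    by_cases h1 : i = Fin.last d
    · subst h1
      have hlast : (Fin.last d).1 = d := rfl
      rw [if_neg (by omega), if_pos rfl, hlast]
      ring
    · have hne : i.1 ≠ d := by
        intro h
        exact h1 (Fin.ext h)
      have hlt : i.1 < d := by have := i.2; omega
      rw [if_neg h1]
      by_cases h0 : 0 < i.1
      · rw [if_pos ⟨h0, hlt⟩]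
        ring
      · rw [if_neg (by omega)]
        have : i.1 = 0 := by omega
        rw [this]
        ring
  rw [Finset.sum_congr rfl key, Finset.sum_add_distrib,
    Finset.sum_ite_eq' Finset.univ (Fin.last d) (fun i => d * X i),
    if_pos (Finset.mem_univ _)]

lemma good_lowBusy_le (hd : 1 ≤ d) {X : Fin (d+1) → ℕ} (hG : GoodPred n d X) :
    lowBusy d X ≤ d := by
  have hrd : n % d < d + 1 := by
    have := Nat.mod_lt n (show 0 < d by omega)
    omega
  unfold lowBusy
  calc ∑ i : Fin (d+1), (if 0 < i.1 ∧ i.1 < d then i.1 * X i else 0)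
      ≤ ∑ i : Fin (d+1), (if i = (⟨n % d, hrd⟩ : Fin (d+1)) then d else 0) := by
        apply Finset.sum_le_sum
        intro i _
        split_ifs with h1 h2
        · rcases hG i h1.1 h1.2 with h | ⟨hr, hle⟩
          · rw [h]; omega
          · calc i.1 * X i ≤ i.1 * 1 := Nat.mul_le_mul_left _ hle
            _ = i.1 := Nat.mul_one _
            _ ≤ d := by omega
        · rcases hG i h1.1 h1.2 with h | ⟨hr, hle⟩
          · rw [h]; omega
          · exact absurd (Fin.ext hr : i = ⟨n % d, hrd⟩) h2
        · omega
        · omega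
    _ = d := by
        rw [Finset.sum_ite_eq' Finset.univ _ (fun _ => d), if_pos (Finset.mem_univ _)]

lemma good_lowBusy_eq (hd : 1 ≤ d) {X : Fin (d+1) → ℕ} (hG : GoodPred n d X)
    (hrd : n % d < d + 1) :
    lowBusy d X = (n % d) * X ⟨n % d, hrd⟩ := by
  unfold lowBusy
  rcases Nat.eq_zero_or_pos (n % d) with hr0 | hr0
  · have hR : (n % d) * X ⟨n % d, hrd⟩ = 0 := Nat.mul_eq_zero.mpr (Or.inl hr0)
    rw [hR]
    apply Finset.sum_eq_zero
    intro i _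
    split_ifs with h1
    · rcases hG i h1.1 h1.2 with h | ⟨hr, -⟩
      · rw [h, Nat.mul_zero]
      · omega
    · rfl
  · have hmem := Finset.mem_univ (⟨n % d, hrd⟩ : Fin (d+1))
    rw [Finset.sum_eq_single (⟨n % d, hrd⟩ : Fin (d+1))]
    · rw [if_pos]
      constructor
      · exact hr0
      · exact Nat.mod_lt n (by omega)
    · intro j _ hj
      split_ifs with h1
      · rcases hG j h1.1 h1.2 with h | ⟨hr, -⟩
        · rw [h, Nat.mul_zero]
        · exact absurd (Fin.ext hr : j = ⟨n % d, hrd⟩) hj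
      · rfl
    · intro habs
      exact absurd hmem habs

/-- phase lemma: a good state with 0 < I < d has I = n % d and no low job present. -/
lemma good_phase (hd : 1 ≤ d) {X : Fin (d+1) → ℕ} (hX : X ∈ stateSpace n d)
    (hG : GoodPred n d X) (h1 : 0 < n - busy d X) (h2 : n - busy d X < d)
    (hrd : n % d < d + 1) :
    n - busy d X = n % d ∧ X ⟨n % d, hrd⟩ = 0 := by
  have hbusy : busy d X ≤ n := (mem_stateSpace_iff.mp hX).1
  have hsplit := busy_split (d := d) (X := X)
  have hlow := good_lowBusy_eq hd hG hrd
  have hrlt : n % d < d := Nat.mod_lt n (by omega)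
  rcases Nat.eq_zero_or_pos (n % d) with hr0 | hr0
  · exfalso
    have hL : lowBusy d X = 0 := by rw [hlow]; exact Nat.mul_eq_zero.mpr (Or.inl hr0)
    have hn : n = (n - busy d X) + d * X (Fin.last d) := by omega
    have hmod : n % d = (n - busy d X) % d := by
      conv_lhs => rw [hn]
      rw [Nat.add_mul_mod_self_left]
    have : (n - busy d X) % d = n - busy d X := Nat.mod_eq_of_lt h2
    omega
  · have hu01 : X ⟨n % d, hrd⟩ = 0 ∨ X ⟨n % d, hrd⟩ = 1 := by
      rcases hG ⟨n % d, hrd⟩ hr0 hrlt with h | ⟨-, h⟩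
      · left; exact h
      · omega
    rcases hu01 with hu0 | hu1
    · have hL : lowBusy d X = 0 := by rw [hlow, hu0, Nat.mul_zero]
      have hn : n = (n - busy d X) + d * X (Fin.last d) := by omega
      have hmod : n % d = (n - busy d X) % d := by
        conv_lhs => rw [hn]
        rw [Nat.add_mul_mod_self_left]
      have : (n - busy d X) % d = n - busy d X := Nat.mod_eq_of_lt h2
      exact ⟨by omega, hu0⟩
    · exfalso
      have hL : lowBusy d X = n % d := by rw [hlow, hu1, Nat.mul_one]
      have hn : n = (n % d + (n - busy d X)) + d * X (Fin.last d) := by omega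
      have hmod : n % d = (n % d + (n - busy d X)) % d := by
        conv_lhs => rw [hn]
        rw [Nat.add_mul_mod_self_left]
      rcases Nat.lt_or_ge (n % d + (n - busy d X)) d with hlt | hge
      · have : (n % d + (n - busy d X)) % d = n % d + (n - busy d X) :=
          Nat.mod_eq_of_lt hlt
        omega
      · have hsub : (n % d + (n - busy d X)) % d
            = (n % d + (n - busy d X) - d) % d := Nat.mod_eq_sub_mod hge
        have h3 : n % d + (n - busy d X) - d < d := by omega
        have : (n % d + (n - busy d X) - d) % d = n % d + (n - busy d X) - d :=
          Nat.mod_eq_of_lt h3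
        omega

lemma good_death {X : Fin (d+1) → ℕ} (hG : GoodPred n d X) (i : Fin (d+1)) :
    GoodPred n d (X - Pi.single i 1) := by
  intro j hj1 hj2
  have hle : (X - Pi.single i 1 : Fin (d+1) → ℕ) j ≤ X j := by
    rw [sub_single_eq_update, Function.update_apply]
    split_ifs with h
    · subst h; omega
    · exact le_refl _
  rcases hG j hj1 hj2 with h | ⟨hr, hb⟩
  · left; omega
  · right; exact ⟨hr, le_trans hle hb⟩

lemma good_arr_last (hd : 1 ≤ d) {X : Fin (d+1) → ℕ} (hG : GoodPred n d X) :
    GoodPred n d (X + Pi.single (Fin.last d) 1) := by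
  intro j hj1 hj2
  have hne : j ≠ Fin.last d := by
    intro h
    have : j.1 = d := by rw [h]; rfl
    omega
  have heq : (X + Pi.single (Fin.last d) 1 : Fin (d+1) → ℕ) j = X j := by
    rw [add_single_eq_update, Function.update_apply, if_neg hne]
  rw [show (X + Pi.single (Fin.last d) 1 : Fin (d+1) → ℕ) j = X j from heq]
  exact hG j hj1 hj2

lemma good_arr_low (hd : 1 ≤ d) {X : Fin (d+1) → ℕ} (hX : X ∈ stateSpace n d)
    (hG : GoodPred n d X) (h1 : 0 < n - busy d X) (h2 : n - busy d X < d)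
    (hI : n - busy d X < d + 1) :
    GoodPred n d (X + Pi.single (⟨n - busy d X, hI⟩ : Fin (d+1)) 1) := by
  have hrd : n % d < d + 1 := by
    have := Nat.mod_lt n (show 0 < d by omega)
    omega
  obtain ⟨hph, hzero⟩ := good_phase hd hX hG h1 h2 hrd
  intro j hj1 hj2
  by_cases hj : j = (⟨n - busy d X, hI⟩ : Fin (d+1))
  · subst hj
    right
    constructor
    · simpa using hph
    · have heq : (X + Pi.single (⟨n - busy d X, hI⟩ : Fin (d+1)) 1 : Fin (d+1) → ℕ)
          (⟨n - busy d X, hI⟩ : Fin (d+1))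
          = X (⟨n - busy d X, hI⟩ : Fin (d+1)) + 1 := by
        rw [add_single_eq_update, Function.update_self]
      rw [heq]
      have hXz : X (⟨n - busy d X, hI⟩ : Fin (d+1)) = 0 := by
        have hfe : (⟨n - busy d X, hI⟩ : Fin (d+1)) = (⟨n % d, hrd⟩ : Fin (d+1)) := by
          apply Fin.ext; simpa using hph
        rw [hfe]; exact hzero
      omega
  · have heq : (X + Pi.single (⟨n - busy d X, hI⟩ : Fin (d+1)) 1 : Fin (d+1) → ℕ) j
        = X j := by
      rw [add_single_eq_update, Function.update_apply, if_neg hj]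
    rw [heq]
    exact hG j hj1 hj2

end Stmt9Aux

namespace Stmt9Aux

variable {n d : ℕ} {lam : ℝ} {π : (Fin (d+1) → ℕ) → ℝ}

instance goodDec (n d : ℕ) : DecidablePred (GoodPred n d) := fun X => by
  unfold GoodPred; infer_instance

def BadS (n d : ℕ) : Finset (Fin (d+1) → ℕ) :=
  (stateSpace n d).filter (fun X => ¬ GoodPred n d X)

def USet (n d : ℕ) : ℕ → Finset (Fin (d+1) → ℕ)
  | 0 => BadS n d
  | (k+1) => (USet n d k).filter
      (fun X => ∀ i : Fin (d+1), 0 < i.1 → 0 < X i → (X - Pi.single i 1) ∈ USet n d k)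

lemma USet_subset_bad (k : ℕ) : USet n d k ⊆ BadS n d := by
  induction k with
  | zero => exact Finset.Subset.refl _
  | succ k ih => exact Finset.Subset.trans (Finset.filter_subset _ _) ih

lemma flow_step (hd : 1 ≤ d) (hlam : 0 ≤ lam) (hprob : IsProbOn n d π)
    (hstat : IsStationaryFull n d lam π) (U : Finset (Fin (d+1) → ℕ))
    (hUB : U ⊆ BadS n d) (hkill : ∀ X, X ∈ BadS n d → X ∉ U → π X = 0)
    (X₀ : Fin (d+1) → ℕ) (hX₀U : X₀ ∈ U) (i₀ : Fin (d+1)) (hi₀ : 0 < i₀.1)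
    (hXi₀ : 0 < X₀ i₀) (hexit : (X₀ - Pi.single i₀ 1) ∉ U) :
    π X₀ = 0 := by
  classical
  set f : (Fin (d+1) → ℕ) → ℝ := fun Y => if Y ∈ U then (1:ℝ) else 0 with hf
  have hfle : ∀ Y, f Y ≤ 1 := by
    intro Y; rw [hf]; dsimp only; split_ifs <;> norm_num
  have hfnn : ∀ Y, 0 ≤ f Y := by
    intro Y; rw [hf]; dsimp only; split_ifs <;> norm_num
  have hnl : 0 ≤ (n:ℝ) * lam := mul_nonneg (Nat.cast_nonneg n) hlam
  have h0 := hstat f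
  have hGU : ∀ X, X ∈ U → Gfull n d lam f X ≤ 0 := by
    intro X hXU
    rw [Gfull_eval]
    have hfX : f X = 1 := if_pos hXU
    have t1 : (if d ≤ n - busy d X then
        f (X + Pi.single (Fin.last d) 1) - f X else 0) ≤ 0 := by
      split_ifs with h
      · rw [hfX]; linarith [hfle (X + Pi.single (Fin.last d) 1)]
      · exact le_refl _
    have t2 : (if h : 0 < n - busy d X ∧ n - busy d X < d then
        f (X + Pi.single (⟨n - busy d X, by omega⟩ : Fin (d+1)) 1) - f X else 0) ≤ 0 := by
      by_cases hc : 0 < n - busy d X ∧ n - busy d X < d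
      · rw [dif_pos hc, hfX]
        linarith [hfle (X + Pi.single (⟨n - busy d X, by omega⟩ : Fin (d+1)) 1)]
      · rw [dif_neg hc]
    have t3 : (∑ i : Fin (d+1), (i.1 * X i : ℝ) * (f (X - Pi.single i 1) - f X)) ≤ 0 := by
      apply Finset.sum_nonpos
      intro i _
      have hc : (0:ℝ) ≤ (i.1 * X i : ℝ) := by positivity
      have hdiff : f (X - Pi.single i 1) - f X ≤ 0 := by
        rw [hfX]; linarith [hfle (X - Pi.single i 1)]
      exact mul_nonpos_of_nonneg_of_nonpos hc hdiff
    have hsum : (n:ℝ) * lam * ((if d ≤ n - busy d X then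
        f (X + Pi.single (Fin.last d) 1) - f X else 0)
        + (if h : 0 < n - busy d X ∧ n - busy d X < d then
          f (X + Pi.single (⟨n - busy d X, by omega⟩ : Fin (d+1)) 1) - f X else 0)) ≤ 0 := by
      have := mul_le_mul_of_nonneg_left (by linarith : (if d ≤ n - busy d X then
        f (X + Pi.single (Fin.last d) 1) - f X else 0)
        + (if h : 0 < n - busy d X ∧ n - busy d X < d then
          f (X + Pi.single (⟨n - busy d X, by omega⟩ : Fin (d+1)) 1) - f X else 0) ≤ 0) hnl
      simpa using this
    linarith
  have hfGood : ∀ Y, Y ∈ stateSpace n d → GoodPred n d Y → f Y = 0 := by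
    intro Y hYS hYG
    rw [hf]
    dsimp only
    rw [if_neg]
    intro hmem
    exact (Finset.mem_filter.mp (hUB hmem)).2 hYG
  have hGGood : ∀ X, X ∈ stateSpace n d → GoodPred n d X → Gfull n d lam f X = 0 := by
    intro X hXS hXG
    rw [Gfull_eval]
    have hfX : f X = 0 := hfGood X hXS hXG
    have t1 : (if d ≤ n - busy d X then
        f (X + Pi.single (Fin.last d) 1) - f X else 0) = 0 := by
      split_ifs with h
      · rw [hfX, hfGood _ (arrival_last_mem X hd hXS h) (good_arr_last hd hXG)]
        ring
      · rfl
    have t2 : (if h : 0 < n - busy d X ∧ n - busy d X < d then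
        f (X + Pi.single (⟨n - busy d X, by omega⟩ : Fin (d+1)) 1) - f X else 0) = 0 := by
      by_cases hc : 0 < n - busy d X ∧ n - busy d X < d
      · rw [dif_pos hc, hfX]
        rw [hfGood _ (arrival_low_mem X _ hXS hc.1 (by simp) )
            (good_arr_low hd hXS hXG hc.1 hc.2 (by omega))]
        ring
      · rw [dif_neg hc]
    have t3 : (∑ i : Fin (d+1), (i.1 * X i : ℝ) * (f (X - Pi.single i 1) - f X)) = 0 := by
      apply Finset.sum_eq_zero
      intro i _
      rw [hfX, hfGood _ (death_mem X i hXS) (good_death hXG i)]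
      ring
    rw [t1, t2, t3]
    ring
  have hnp : ∀ X ∈ stateSpace n d, π X * Gfull n d lam f X ≤ 0 := by
    intro X hXS
    by_cases hXU : X ∈ U
    · exact mul_nonpos_of_nonneg_of_nonpos (hprob.1 X) (hGU X hXU)
    · by_cases hXG : GoodPred n d X
      · rw [hGGood X hXS hXG, mul_zero]
      · rw [hkill X (Finset.mem_filter.mpr ⟨hXS, hXG⟩) hXU, zero_mul]
  have hall := (Finset.sum_eq_zero_iff_of_nonpos hnp).mp h0
  have hX₀S : X₀ ∈ stateSpace n d := (Finset.mem_filter.mp (hUB hX₀U)).1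
  have hzero := hall X₀ hX₀S
  have hneg : Gfull n d lam f X₀ < 0 := by
    rw [Gfull_eval]
    have hfX : f X₀ = 1 := if_pos hX₀U
    have t1 : (if d ≤ n - busy d X₀ then
        f (X₀ + Pi.single (Fin.last d) 1) - f X₀ else 0) ≤ 0 := by
      split_ifs with h
      · rw [hfX]; linarith [hfle (X₀ + Pi.single (Fin.last d) 1)]
      · exact le_refl _
    have t2 : (if h : 0 < n - busy d X₀ ∧ n - busy d X₀ < d then
        f (X₀ + Pi.single (⟨n - busy d X₀, by omega⟩ : Fin (d+1)) 1) - f X₀ else 0) ≤ 0 := by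
      by_cases hc : 0 < n - busy d X₀ ∧ n - busy d X₀ < d
      · rw [dif_pos hc, hfX]
        linarith [hfle (X₀ + Pi.single (⟨n - busy d X₀, by omega⟩ : Fin (d+1)) 1)]
      · rw [dif_neg hc]
    have hsum : (n:ℝ) * lam * ((if d ≤ n - busy d X₀ then
        f (X₀ + Pi.single (Fin.last d) 1) - f X₀ else 0)
        + (if h : 0 < n - busy d X₀ ∧ n - busy d X₀ < d then
          f (X₀ + Pi.single (⟨n - busy d X₀, by omega⟩ : Fin (d+1)) 1) - f X₀ else 0)) ≤ 0 := by
      have := mul_le_mul_of_nonneg_left (by linarith : (if d ≤ n - busy d X₀ then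
        f (X₀ + Pi.single (Fin.last d) 1) - f X₀ else 0)
        + (if h : 0 < n - busy d X₀ ∧ n - busy d X₀ < d then
          f (X₀ + Pi.single (⟨n - busy d X₀, by omega⟩ : Fin (d+1)) 1) - f X₀ else 0) ≤ 0) hnl
      simpa using this
    have hterm : (i₀.1 * X₀ i₀ : ℝ) * (f (X₀ - Pi.single i₀ 1) - f X₀)
        = -(i₀.1 * X₀ i₀ : ℝ) := by
      have : f (X₀ - Pi.single i₀ 1) = 0 := by
        rw [hf]; dsimp only; rw [if_neg hexit]
      rw [this, hfX]
      ring
    have ht3 : (∑ i : Fin (d+1), (i.1 * X₀ i : ℝ) * (f (X₀ - Pi.single i 1) - f X₀))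
        ≤ -(i₀.1 * X₀ i₀ : ℝ) := by
      have hle2 : ∀ i ∈ (Finset.univ : Finset (Fin (d+1))),
          (i.1 * X₀ i : ℝ) * (f (X₀ - Pi.single i 1) - f X₀)
          ≤ (if i = i₀ then (i.1 * X₀ i : ℝ) * (f (X₀ - Pi.single i 1) - f X₀) else 0) := by
        intro i _
        split_ifs with h
        · exact le_refl _
        · apply mul_nonpos_of_nonneg_of_nonpos
          · positivity
          · rw [hfX]; linarith [hfle (X₀ - Pi.single i 1)]
      have hs := Finset.sum_le_sum hle2
      have hsum2 : (∑ i : Fin (d+1), if i = i₀ then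
            (i.1 * X₀ i : ℝ) * (f (X₀ - Pi.single i 1) - f X₀) else 0)
          = (i₀.1 * X₀ i₀ : ℝ) * (f (X₀ - Pi.single i₀ 1) - f X₀) := by
        rw [Finset.sum_eq_single i₀]
        · rw [if_pos rfl]
        · intro j _ hj; rw [if_neg hj]
        · intro h; exact absurd (Finset.mem_univ _) h
      linarith [hterm, hs, hsum2]
    have hpos : (1:ℝ) ≤ (i₀.1 * X₀ i₀ : ℝ) := by
      have h1 : 1 ≤ i₀.1 * X₀ i₀ := Nat.mul_pos hi₀ hXi₀
      exact_mod_cast h1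
    linarith
  rcases mul_eq_zero.mp hzero with h | h
  · exact h
  · exact absurd h (ne_of_lt hneg)

end Stmt9Aux

namespace Stmt9Aux

variable {n d : ℕ} {lam : ℝ} {π : (Fin (d+1) → ℕ) → ℝ}

lemma kill_all (hd : 1 ≤ d) (hlam : 0 ≤ lam) (hprob : IsProbOn n d π)
    (hstat : IsStationaryFull n d lam π) :
    ∀ k, ∀ X, X ∈ BadS n d → X ∉ USet n d k → π X = 0 := by
  intro k
  induction k with
  | zero => intro X hXB hXU; exact absurd hXB hXU
  | succ k ih =>
    intro X hXB hXU
    by_cases hXk : X ∈ USet n d k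
    · have hex : ∃ i : Fin (d+1), 0 < i.1 ∧ 0 < X i
          ∧ (X - Pi.single i 1) ∉ USet n d k := by
        by_contra hcon
        push_neg at hcon
        apply hXU
        exact Finset.mem_filter.mpr ⟨hXk, fun i h1 h2 => hcon i h1 h2⟩
      obtain ⟨i, h1, h2, h3⟩ := hex
      exact flow_step hd hlam hprob hstat (USet n d k) (USet_subset_bad k)
        ih X hXk i h1 h2 h3
    · exact ih X hXB hXk

lemma bad_coord {X : Fin (d+1) → ℕ} (hnG : ¬ GoodPred n d X) :
    ∃ j : Fin (d+1), 0 < j.1 ∧ j.1 < d ∧ 0 < X j := by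
  unfold GoodPred at hnG
  push_neg at hnG
  obtain ⟨j, h1, h2, h3, -⟩ := hnG
  exact ⟨j, h1, h2, Nat.pos_of_ne_zero h3⟩

lemma jobs_pos {X : Fin (d+1) → ℕ} {j : Fin (d+1)} (hj : 0 < j.1) (hX : 0 < X j) :
    0 < jobs d X := by
  unfold jobs
  have hle : (if 0 < j.1 then X j else 0) ≤ ∑ i : Fin (d+1), if 0 < i.1 then X i else 0 :=
    Finset.single_le_sum (f := fun i => if 0 < i.1 then X i else 0)
      (fun _ _ => by positivity) (Finset.mem_univ j)
  rw [if_pos hj] at hle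
  omega

lemma escape (hd : 1 ≤ d) :
    ∀ m, ∀ X, X ∈ BadS n d → jobs d X ≤ m → X ∉ USet n d m := by
  intro m
  induction m with
  | zero =>
    intro X hXB hj hXU
    obtain ⟨j, h1, h2, h3⟩ := bad_coord (Finset.mem_filter.mp hXB).2
    have := jobs_pos h1 h3
    omega
  | succ m ih =>
    intro X hXB hj hXU
    obtain ⟨j, h1, h2, h3⟩ := bad_coord (Finset.mem_filter.mp hXB).2
    have hXS : X ∈ stateSpace n d := (Finset.mem_filter.mp hXB).1
    have hYS : (X - Pi.single j 1) ∈ stateSpace n d := death_mem X j hXS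
    have hjobs : jobs d (X - Pi.single j 1) + 1 = jobs d X := jobs_sub_single X j h3 h1
    have hYU : (X - Pi.single j 1) ∈ USet n d m :=
      (Finset.mem_filter.mp hXU).2 j h1 h3
    by_cases hYG : GoodPred n d (X - Pi.single j 1)
    · have hYB := USet_subset_bad m hYU
      exact (Finset.mem_filter.mp hYB).2 hYG
    · have hYB : (X - Pi.single j 1) ∈ BadS n d := Finset.mem_filter.mpr ⟨hYS, hYG⟩
      exact ih (X - Pi.single j 1) hYB (by omega) hYU

/-- Support lemma: any stationary distribution vanishes outside Good states. -/
lemma support_good (hd : 1 ≤ d) (hlam : 0 ≤ lam) (hprob : IsProbOn n d π)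
    (hstat : IsStationaryFull n d lam π) {X : Fin (d+1) → ℕ}
    (hXS : X ∈ stateSpace n d) (hXG : ¬ GoodPred n d X) : π X = 0 := by
  have hXB : X ∈ BadS n d := Finset.mem_filter.mpr ⟨hXS, hXG⟩
  exact kill_all hd hlam hprob hstat (jobs d X) X hXB
    (escape hd (jobs d X) X hXB (le_refl _))

end Stmt9Aux

namespace Stmt9Aux

variable {n d : ℕ} {lam : ℝ} {π : (Fin (d+1) → ℕ) → ℝ}

/-- blocking probability -/
noncomputable def P0v (n d : ℕ) (π : (Fin (d+1) → ℕ) → ℝ) : ℝ :=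
  ∑ X ∈ stateSpace n d, π X * (if n - busy d X = 0 then (1:ℝ) else 0)

noncomputable def PAv (n d : ℕ) (π : (Fin (d+1) → ℕ) → ℝ) : ℝ :=
  ∑ X ∈ stateSpace n d,
    π X * (if 0 < n - busy d X ∧ n - busy d X < d then (1:ℝ) else 0)

noncomputable def Wv (n d : ℕ) (π : (Fin (d+1) → ℕ) → ℝ) (m : ℕ) : ℝ :=
  ∑ X ∈ stateSpace n d,
    π X * (if m*d < n - busy d X ∧ n - busy d X ≤ m*d + d then (1:ℝ) else 0)

noncomputable def EJv (n d : ℕ) (π : (Fin (d+1) → ℕ) → ℝ) : ℝ :=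
  ∑ X ∈ stateSpace n d, π X * (jobs d X : ℝ)

lemma P0v_nonneg (hprob : IsProbOn n d π) : 0 ≤ P0v n d π := by
  apply Finset.sum_nonneg
  intro X _
  apply mul_nonneg (hprob.1 X)
  split_ifs <;> norm_num

lemma PAv_nonneg (hprob : IsProbOn n d π) : 0 ≤ PAv n d π := by
  apply Finset.sum_nonneg
  intro X _
  apply mul_nonneg (hprob.1 X)
  split_ifs <;> norm_num

lemma Wv_nonneg (hprob : IsProbOn n d π) (m : ℕ) : 0 ≤ Wv n d π m := by
  apply Finset.sum_nonneg
  intro X _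
  apply mul_nonneg (hprob.1 X)
  split_ifs <;> norm_num

/-- E[lowBusy] ≤ d, by the support lemma. -/
lemma elow_le (hd : 1 ≤ d) (hlam : 0 ≤ lam) (hprob : IsProbOn n d π)
    (hstat : IsStationaryFull n d lam π) :
    ∑ X ∈ stateSpace n d, π X * (lowBusy d X : ℝ) ≤ d := by
  have h1 : ∀ X ∈ stateSpace n d, π X * (lowBusy d X : ℝ) ≤ π X * d := by
    intro X hXS
    by_cases hXG : GoodPred n d X
    · apply mul_le_mul_of_nonneg_left _ (hprob.1 X)
      exact_mod_cast Nat.cast_le.mpr (good_lowBusy_le hd hXG)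
    · rw [support_good hd hlam hprob hstat hXS hXG]
      simp
  calc ∑ X ∈ stateSpace n d, π X * (lowBusy d X : ℝ)
      ≤ ∑ X ∈ stateSpace n d, π X * d := Finset.sum_le_sum h1
    _ = d := by rw [← Finset.sum_mul, hprob.2.1, one_mul]

/-- nλ · P_A ≤ d. -/
lemma PA_le (hd : 1 ≤ d) (hlam : 0 ≤ lam) (hprob : IsProbOn n d π)
    (hstat : IsStationaryFull n d lam π) :
    (n:ℝ) * lam * PAv n d π ≤ d := by
  have := ident_low (π := π) hstat
  rw [PAv]
  rw [← this]
  exact elow_le hd hlam hprob hstat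

/-- nλ · W 0 = n · P0. -/
lemma W0_eq (hd : 1 ≤ d) (hprob : IsProbOn n d π)
    (hstat : IsStationaryFull n d lam π) :
    (n:ℝ) * lam * Wv n d π 0 = (n:ℝ) * P0v n d π := by
  have hid := ident_level (π := π) hd hstat 0 (Or.inl rfl)
  have hpt : ∀ X ∈ stateSpace n d,
      π X * (∑ i : Fin (d+1), (i.1 * X i : ℝ) *
        (if 0 < (n - busy d X) + i.1 ∧ n - busy d X ≤ 0 then 1 else 0))
      = (n:ℝ) * (π X * (if n - busy d X = 0 then (1:ℝ) else 0)) := by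
    intro X hXS
    have hbusy : busy d X ≤ n := (mem_stateSpace_iff.mp hXS).1
    by_cases hI : n - busy d X = 0
    · have hsum : (∑ i : Fin (d+1), (i.1 * X i : ℝ) *
          (if 0 < (n - busy d X) + i.1 ∧ n - busy d X ≤ 0 then 1 else 0))
          = (busy d X : ℝ) := by
        have : (busy d X : ℝ) = ∑ i : Fin (d+1), ((i.1 * X i : ℕ) : ℝ) := by
          unfold busy
          push_cast
          rfl
        rw [this]
        apply Finset.sum_congr rfl
        intro i _
        rcases Nat.eq_zero_or_pos i.1 with h0 | h0
        · rw [if_neg (by omega), h0]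
          push_cast
          ring
        · rw [if_pos (by omega)]
          push_cast
          ring
      rw [hsum, if_pos hI]
      have : (busy d X : ℝ) = n := by
        have : busy d X = n := by omega
        exact_mod_cast this
      rw [this]
      ring
    · have hsum : (∑ i : Fin (d+1), (i.1 * X i : ℝ) *
          (if 0 < (n - busy d X) + i.1 ∧ n - busy d X ≤ 0 then 1 else 0)) = 0 := by
        apply Finset.sum_eq_zero
        intro i _
        rw [if_neg (by omega)]
        ring
      rw [hsum, if_neg hI]
      ring
  rw [Finset.sum_congr rfl hpt, ← Finset.mul_sum] at hid
  have hW : Wv n d π 0 = ∑ X ∈ stateSpace n d,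
      π X * (if 0 < n - busy d X ∧ n - busy d X ≤ 0 + d then 1 else 0) := by
    rw [Wv]
    apply Finset.sum_congr rfl
    intro X _
    congr 1
    have : (0*d < n - busy d X ∧ n - busy d X ≤ 0*d + d)
        ↔ (0 < n - busy d X ∧ n - busy d X ≤ 0 + d) := by
      constructor <;> intro h <;> constructor <;> omega
    simp only [this]
  rw [hW, P0v]
  exact hid

/-- window recursion -/
lemma level_rec (hd : 1 ≤ d) (hlam : 0 ≤ lam) (hprob : IsProbOn n d π)
    (hstat : IsStationaryFull n d lam π) (m : ℕ) :
    ((n:ℝ) - ((m:ℝ)+2)*d) * Wv n d π m ≤ (n:ℝ) * lam * Wv n d π (m+1) := by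
  have hK : (m+1)*d = 0 ∨ d ≤ (m+1)*d :=
    Or.inr (Nat.le_mul_of_pos_left d (show 0 < m+1 by omega))
  have hid := ident_level (π := π) hd hstat ((m+1)*d) hK
  have hWm1 : Wv n d π (m+1) = ∑ X ∈ stateSpace n d,
      π X * (if (m+1)*d < n - busy d X ∧ n - busy d X ≤ (m+1)*d + d then (1:ℝ) else 0) := rfl
  rw [hWm1, hid, Wv, Finset.mul_sum]
  apply Finset.sum_le_sum
  intro X hXS
  have hbusy : busy d X ≤ n := (mem_stateSpace_iff.mp hXS).1
  have hDnn : (0:ℝ) ≤ ∑ i : Fin (d+1), (i.1 * X i : ℝ) *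
      (if (m+1)*d < (n - busy d X) + i.1 ∧ n - busy d X ≤ (m+1)*d then 1 else 0) := by
    apply Finset.sum_nonneg
    intro i _
    apply mul_nonneg (by positivity)
    split_ifs <;> norm_num
  by_cases hXG : GoodPred n d X
  · by_cases hev : m*d < n - busy d X ∧ n - busy d X ≤ m*d + d
    · rw [if_pos hev]
      have hcond : (m+1)*d < (n - busy d X) + (Fin.last d).1
          ∧ n - busy d X ≤ (m+1)*d := by
        have hlast : (Fin.last d).1 = d := rfl
        rw [hlast]
        constructor
        · have : (m+1)*d = m*d + d := by ring
          omega
        · have : (m+1)*d = m*d + d := by ring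
          omega
      have hterm : ((Fin.last d).1 * X (Fin.last d) : ℝ) *
          (if (m+1)*d < (n - busy d X) + (Fin.last d).1
            ∧ n - busy d X ≤ (m+1)*d then 1 else 0)
          = ((d * X (Fin.last d) : ℕ) : ℝ) := by
        rw [if_pos hcond]
        have hlast : (Fin.last d).1 = d := rfl
        rw [hlast]
        push_cast
        ring
      have hsingle : ((d * X (Fin.last d) : ℕ) : ℝ)
          ≤ ∑ i : Fin (d+1), (i.1 * X i : ℝ) *
            (if (m+1)*d < (n - busy d X) + i.1 ∧ n - busy d X ≤ (m+1)*d then 1 else 0) := by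
        rw [← hterm]
        apply Finset.single_le_sum (f := fun i : Fin (d+1) => (i.1 * X i : ℝ) *
          (if (m+1)*d < (n - busy d X) + i.1 ∧ n - busy d X ≤ (m+1)*d then 1 else 0))
          _ (Finset.mem_univ _)
        intro i _
        apply mul_nonneg (by positivity)
        split_ifs <;> norm_num
      have hgeq : ((n:ℝ) - ((m:ℝ)+2)*d) ≤ ((d * X (Fin.last d) : ℕ) : ℝ) := by
        have hsplit := busy_split (d := d) (X := X)
        have hlowle : lowBusy d X ≤ d := good_lowBusy_le hd hXG
        have hIle : n - busy d X ≤ m*d + d := hev.2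
        have h1 : (busy d X : ℝ) = (n:ℝ) - ((n - busy d X : ℕ) : ℝ) := by
          rw [Nat.cast_sub hbusy]
          ring
        have h2 : ((d * X (Fin.last d) : ℕ) : ℝ)
            = (busy d X : ℝ) - (lowBusy d X : ℝ) := by
          rw [hsplit]
          push_cast
          ring
        have h3 : ((n - busy d X : ℕ) : ℝ) ≤ (m:ℝ)*d + d := by
          have h5 : ((n - busy d X : ℕ) : ℝ) ≤ ((m*d + d : ℕ) : ℝ) := Nat.cast_le.mpr hev.2
          push_cast at h5
          linarith
        have h4 : (lowBusy d X : ℝ) ≤ (d:ℝ) := by exact_mod_cast hlowle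
        rw [h2, h1]
        linarith
      calc ((n:ℝ) - ((m:ℝ)+2)*d) * (π X * 1)
          ≤ π X * ((d * X (Fin.last d) : ℕ) : ℝ) := by
            rw [mul_one, mul_comm ((n:ℝ) - ((m:ℝ)+2)*d) (π X)]
            exact mul_le_mul_of_nonneg_left hgeq (hprob.1 X)
        _ ≤ π X * ∑ i : Fin (d+1), (i.1 * X i : ℝ) *
            (if (m+1)*d < (n - busy d X) + i.1 ∧ n - busy d X ≤ (m+1)*d then 1 else 0) :=
            mul_le_mul_of_nonneg_left hsingle (hprob.1 X)
    · rw [if_neg hev]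
      calc ((n:ℝ) - ((m:ℝ)+2)*d) * (π X * 0) = 0 := by ring
        _ ≤ π X * ∑ i : Fin (d+1), (i.1 * X i : ℝ) *
            (if (m+1)*d < (n - busy d X) + i.1 ∧ n - busy d X ≤ (m+1)*d then 1 else 0) :=
            mul_nonneg (hprob.1 X) hDnn
  · rw [support_good hd hlam hprob hstat hXS hXG]
    calc ((n:ℝ) - ((m:ℝ)+2)*d) * ((0:ℝ) * _) = 0 := by ring
      _ ≤ (0:ℝ) * ∑ i : Fin (d+1), (i.1 * X i : ℝ) *
          (if (m+1)*d < (n - busy d X) + i.1 ∧ n - busy d X ≤ (m+1)*d then 1 else 0) := by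
          rw [zero_mul]

end Stmt9Aux

namespace Stmt9Aux

variable {n d : ℕ} {lam : ℝ} {π : (Fin (d+1) → ℕ) → ℝ}

lemma sum_W_le_one (hprob : IsProbOn n d π) (M : ℕ) :
    ∑ m ∈ Finset.range (M+1), Wv n d π m ≤ 1 := by
  unfold Wv
  rw [Finset.sum_comm]
  have hpt : ∀ X ∈ stateSpace n d,
      (∑ m ∈ Finset.range (M+1),
        π X * (if m*d < n - busy d X ∧ n - busy d X ≤ m*d + d then (1:ℝ) else 0))
      ≤ π X := by
    intro X _
    rw [← Finset.mul_sum]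
    have hind : (∑ m ∈ Finset.range (M+1),
        (if m*d < n - busy d X ∧ n - busy d X ≤ m*d + d then (1:ℝ) else 0)) ≤ 1 := by
      by_cases hex : ∃ m₀ ∈ Finset.range (M+1),
          (m₀*d < n - busy d X ∧ n - busy d X ≤ m₀*d + d)
      · obtain ⟨m₀, hm₀r, hc₀⟩ := hex
        have huniq : ∀ m, (m*d < n - busy d X ∧ n - busy d X ≤ m*d + d) → m = m₀ := by
          intro m hc
          rcases lt_trichotomy m m₀ with h | h | h
          · exfalso
            have h1 := Nat.mul_le_mul_right d (show m+1 ≤ m₀ by omega)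
            have h2 : (m+1)*d = m*d + d := by ring
            omega
          · exact h
          · exfalso
            have h1 := Nat.mul_le_mul_right d (show m₀+1 ≤ m by omega)
            have h2 : (m₀+1)*d = m₀*d + d := by ring
            omega
        calc (∑ m ∈ Finset.range (M+1),
            (if m*d < n - busy d X ∧ n - busy d X ≤ m*d + d then (1:ℝ) else 0))
            ≤ ∑ m ∈ Finset.range (M+1), (if m = m₀ then (1:ℝ) else 0) := by
              apply Finset.sum_le_sum
              intro m _
              split_ifs with h1 h2 h2
              · exact le_refl _
              · exact absurd (huniq m h1) h2
              · norm_num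
              · exact le_refl _
          _ = 1 := by
              rw [Finset.sum_eq_single m₀]
              · rw [if_pos rfl]
              · intro b _ hb; rw [if_neg hb]
              · intro h; exact absurd hm₀r h
      · push_neg at hex
        have : (∑ m ∈ Finset.range (M+1),
            (if m*d < n - busy d X ∧ n - busy d X ≤ m*d + d then (1:ℝ) else 0)) = 0 := by
          apply Finset.sum_eq_zero
          intro m hm
          have hnc : ¬(m*d < n - busy d X ∧ n - busy d X ≤ m*d + d) := by
            rintro ⟨h1, h2⟩
            exact absurd h2 (not_le.mpr (hex m hm h1))
          rw [if_neg hnc]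
        rw [this]
        norm_num
    calc π X * (∑ m ∈ Finset.range (M+1),
        (if m*d < n - busy d X ∧ n - busy d X ≤ m*d + d then (1:ℝ) else 0))
        ≤ π X * 1 := mul_le_mul_of_nonneg_left hind (hprob.1 X)
      _ = π X := mul_one _
  calc (∑ X ∈ stateSpace n d, ∑ m ∈ Finset.range (M+1),
      π X * (if m*d < n - busy d X ∧ n - busy d X ≤ m*d + d then (1:ℝ) else 0))
      ≤ ∑ X ∈ stateSpace n d, π X := Finset.sum_le_sum hpt
    _ = 1 := hprob.2.1

set_option maxHeartbeats 1000000 in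
lemma W0_small (hd : 1 ≤ d) (hlam0 : 0 ≤ lam) (hlam1 : lam ≤ 1)
    (hlampos : 0 < lam) (hn0 : 0 < n)
    (hprob : IsProbOn n d π) (hstat : IsStationaryFull n d lam π)
    (M : ℕ) (hcase : ((M:ℝ)+2)*d ≤ (n:ℝ)/2) (hsum4 : 4*((M:ℝ)+2)^2*d ≤ (n:ℝ)) :
    Wv n d π 0 ≤ 2/((M:ℝ)+1) := by
  have hnl : (0:ℝ) < (n:ℝ) * lam := by positivity
  have hnpos : (0:ℝ) < (n:ℝ) := by exact_mod_cast hn0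
  have hd1 : (1:ℝ) ≤ (d:ℝ) := by exact_mod_cast hd
  set x : ℕ → ℝ := fun k => max 0 (1 - ((n:ℝ) - ((k:ℝ)+2)*d)/((n:ℝ)*lam)) with hx
  have hxnn : ∀ k : ℕ, 0 ≤ x k := fun k => le_max_left _ _
  have hx_ge : ∀ k : ℕ, 1 - ((n:ℝ) - ((k:ℝ)+2)*d)/((n:ℝ)*lam) ≤ x k := fun k => le_max_right _ _
  set S : ℕ → ℝ := fun m => ∑ k ∈ Finset.range m, x k with hS
  have hSnn : ∀ m : ℕ, 0 ≤ S m := fun m => Finset.sum_nonneg (fun k _ => hxnn k)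
  have hSmono : ∀ m m' : ℕ, m ≤ m' → S m ≤ S m' := by
    intro m m' h
    apply Finset.sum_le_sum_of_subset_of_nonneg (Finset.range_subset_range.mpr h)
    intro k _ _
    exact hxnn k
  have hSM : S M ≤ 1/2 := by
    by_cases hA : ((M:ℝ)+1)*d ≤ (n:ℝ)*(1-lam)
    · have hz : ∀ k ∈ Finset.range M, x k = 0 := by
        intro k hk
        have hkM : (k:ℝ) + 2 ≤ (M:ℝ) + 1 := by
          have hklt : (k:ℕ) < M := Finset.mem_range.mp hk
          have : (k:ℝ) + 1 ≤ (M:ℝ) := by exact_mod_cast hklt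
          linarith
        have h1 : ((k:ℝ)+2)*d ≤ (n:ℝ)*(1-lam) := by
          calc ((k:ℝ)+2)*d ≤ ((M:ℝ)+1)*d :=
                mul_le_mul_of_nonneg_right hkM (by linarith)
            _ ≤ (n:ℝ)*(1-lam) := hA
        have h2 : 1 - ((n:ℝ) - ((k:ℝ)+2)*d)/((n:ℝ)*lam) ≤ 0 := by
          rw [sub_nonpos, le_div_iff₀ hnl]
          nlinarith
        rw [hx]
        exact max_eq_left h2
      calc S M = ∑ k ∈ Finset.range M, x k := rfl
        _ = 0 := by rw [Finset.sum_congr rfl hz, Finset.sum_const_zero]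
        _ ≤ 1/2 := by norm_num
    · push_neg at hA
      have hlam_half : (1:ℝ)/2 ≤ lam := by
        have h1 : (n:ℝ)*(1-lam) < (n:ℝ)/2 := by
          calc (n:ℝ)*(1-lam) < ((M:ℝ)+1)*d := hA
            _ ≤ ((M:ℝ)+2)*d := by nlinarith
            _ ≤ (n:ℝ)/2 := hcase
        nlinarith
      have hxb : ∀ k ∈ Finset.range M, x k ≤ ((M:ℝ)+1)*d/((n:ℝ)*lam) := by
        intro k hk
        have hkM : (k:ℝ) + 2 ≤ (M:ℝ) + 1 := by
          have hklt : (k:ℕ) < M := Finset.mem_range.mp hk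
          have : (k:ℝ) + 1 ≤ (M:ℝ) := by exact_mod_cast hklt
          linarith
        have hkey : 1 - ((n:ℝ) - ((k:ℝ)+2)*d)/((n:ℝ)*lam) ≤ ((k:ℝ)+2)*d/((n:ℝ)*lam) := by
          have h1 : ((n:ℝ) - ((k:ℝ)+2)*d)/((n:ℝ)*lam) + ((k:ℝ)+2)*d/((n:ℝ)*lam)
              = (n:ℝ)/((n:ℝ)*lam) := by
            rw [← add_div]
            ring_nf
          have h2 : (1:ℝ) ≤ (n:ℝ)/((n:ℝ)*lam) := by
            rw [le_div_iff₀ hnl]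
            nlinarith
          linarith
        apply max_le
        · positivity
        · calc 1 - ((n:ℝ) - ((k:ℝ)+2)*d)/((n:ℝ)*lam)
              ≤ ((k:ℝ)+2)*d/((n:ℝ)*lam) := hkey
            _ ≤ ((M:ℝ)+1)*d/((n:ℝ)*lam) := by
              apply (div_le_div_iff_of_pos_right hnl).mpr
              nlinarith
      calc S M = ∑ k ∈ Finset.range M, x k := rfl
        _ ≤ ∑ _k ∈ Finset.range M, ((M:ℝ)+1)*d/((n:ℝ)*lam) :=
            Finset.sum_le_sum hxb
        _ = (M:ℝ) * (((M:ℝ)+1)*d/((n:ℝ)*lam)) := by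
            rw [Finset.sum_const, Finset.card_range, nsmul_eq_mul]
        _ ≤ 1/2 := by
            rw [mul_div_assoc', div_le_iff₀ hnl]
            have hnlam : (n:ℝ)/2 ≤ (n:ℝ)*lam := by nlinarith
            have hM0 : (0:ℝ) ≤ (M:ℝ) := Nat.cast_nonneg M
            nlinarith [hsum4, hnlam, hM0, hd1, mul_nonneg hM0 (by linarith : (0:ℝ) ≤ (d:ℝ))]
  -- induction: each window retains at least half the mass of window 0
  have hW0nn : 0 ≤ Wv n d π 0 := Wv_nonneg hprob 0
  have hind : ∀ m, m ≤ M → (1 - S m) * Wv n d π 0 ≤ Wv n d π m := by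
    intro m
    induction m with
    | zero =>
      intro _
      have hS0 : S 0 = 0 := Finset.sum_range_zero x
      rw [hS0]
      norm_num
    | succ m ih =>
      intro hm1
      have hm : m ≤ M := by omega
      have hIH := ih hm
      have hrec := level_rec hd hlam0 hprob hstat m
      have hmM : (m:ℝ) + 2 ≤ (M:ℝ) + 2 := by
        have : (m:ℝ) ≤ (M:ℝ) := by exact_mod_cast hm
        linarith
      have hrle : ((m:ℝ)+2)*d ≤ (n:ℝ)/2 := by
        calc ((m:ℝ)+2)*d ≤ ((M:ℝ)+2)*d := mul_le_mul_of_nonneg_right hmM (by linarith)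
          _ ≤ (n:ℝ)/2 := hcase
      have hρnn : 0 ≤ ((n:ℝ) - ((m:ℝ)+2)*d)/((n:ℝ)*lam) :=
        div_nonneg (by linarith) (le_of_lt hnl)
      have hWm1 : ((n:ℝ) - ((m:ℝ)+2)*d)/((n:ℝ)*lam) * Wv n d π m ≤ Wv n d π (m+1) := by
        rw [div_mul_eq_mul_div, div_le_iff₀ hnl]
        calc ((n:ℝ) - ((m:ℝ)+2)*d) * Wv n d π m
            ≤ (n:ℝ)*lam*Wv n d π (m+1) := hrec
          _ = Wv n d π (m+1) * ((n:ℝ)*lam) := by ring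
      have hxm : 1 - x m ≤ ((n:ℝ) - ((m:ℝ)+2)*d)/((n:ℝ)*lam) := by
        have := hx_ge m
        linarith
      have hxm1 : x m ≤ 1 := by
        rw [hx]
        apply max_le
        · norm_num
        · linarith
      have hWmnn : 0 ≤ Wv n d π m := Wv_nonneg hprob m
      have hSm12 : S m ≤ 1/2 := le_trans (hSmono m M hm) hSM
      have hSm1 : S (m+1) = S m + x m := Finset.sum_range_succ x m
      have hstep1 : (1 - S (m+1)) * Wv n d π 0 ≤ ((1 - x m) * (1 - S m)) * Wv n d π 0 := by
        apply mul_le_mul_of_nonneg_right _ hW0nn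
        have hxs : 0 ≤ x m * S m := mul_nonneg (hxnn m) (hSnn m)
        have hexp : (1 - x m) * (1 - S m) = 1 - S m - x m + x m * S m := by ring
        rw [hexp, hSm1]
        linarith
      have hstep2 : ((1 - x m) * (1 - S m)) * Wv n d π 0 ≤ (1 - x m) * Wv n d π m := by
        rw [mul_assoc]
        exact mul_le_mul_of_nonneg_left hIH (by linarith)
      have hstep3 : (1 - x m) * Wv n d π m
          ≤ ((n:ℝ) - ((m:ℝ)+2)*d)/((n:ℝ)*lam) * Wv n d π m :=
        mul_le_mul_of_nonneg_right hxm hWmnn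
      linarith
  -- conclusion
  have hhalf : ∀ m ∈ Finset.range (M+1), Wv n d π 0 / 2 ≤ Wv n d π m := by
    intro m hm
    have hm' : m ≤ M := by have := Finset.mem_range.mp hm; omega
    have hSm12 : S m ≤ 1/2 := le_trans (hSmono m M hm') hSM
    calc Wv n d π 0 / 2 ≤ (1 - S m) * Wv n d π 0 := by nlinarith
      _ ≤ Wv n d π m := hind m hm'
  have hfinal : ((M:ℝ)+1) * (Wv n d π 0 / 2) ≤ 1 := by
    calc ((M:ℝ)+1) * (Wv n d π 0 / 2)
        = ∑ _m ∈ Finset.range (M+1), Wv n d π 0 / 2 := by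
          rw [Finset.sum_const, Finset.card_range, nsmul_eq_mul]
          push_cast
          ring
      _ ≤ ∑ m ∈ Finset.range (M+1), Wv n d π m := Finset.sum_le_sum hhalf
      _ ≤ 1 := sum_W_le_one hprob M
  have hM1 : (0:ℝ) < (M:ℝ)+1 := by positivity
  rw [le_div_iff₀ hM1]
  nlinarith

end Stmt9Aux

namespace Stmt9Aux

variable {n d : ℕ} {lam : ℝ} {π : (Fin (d+1) → ℕ) → ℝ}

lemma one_minus_P0 (hprob : IsProbOn n d π) :
    ∑ X ∈ stateSpace n d, π X * (if 0 < n - busy d X then (1:ℝ) else 0)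
      = 1 - P0v n d π := by
  have hpt : ∀ X ∈ stateSpace n d,
      π X * (if 0 < n - busy d X then (1:ℝ) else 0)
        = π X - π X * (if n - busy d X = 0 then (1:ℝ) else 0) := by
    intro X _
    by_cases h : n - busy d X = 0
    · rw [if_neg (by omega), if_pos h]
      ring
    · rw [if_pos (by omega), if_neg h]
      ring
  rw [Finset.sum_congr rfl hpt, Finset.sum_sub_distrib, hprob.2.1]
  rfl

lemma P0_eq_lam_W0 (hd : 1 ≤ d) (hn0 : 0 < n) (hprob : IsProbOn n d π)
    (hstat : IsStationaryFull n d lam π) :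
    P0v n d π = lam * Wv n d π 0 := by
  have h := W0_eq (π := π) hd hprob hstat
  have hn : ((n:ℝ)) ≠ 0 := by positivity
  apply mul_left_cancel₀ hn
  rw [← h]
  ring

lemma EJ_bounds (hd : 1 ≤ d) (hlam0 : 0 ≤ lam) (hprob : IsProbOn n d π)
    (hstat : IsStationaryFull n d lam π) :
    (n:ℝ)*lam*((1 - P0v n d π) * (d:ℝ)⁻¹) ≤ EJv n d π
      ∧ EJv n d π ≤ (n:ℝ)*lam*((1 - P0v n d π) * (d:ℝ)⁻¹ + PAv n d π) := by
  have hd1 : (1:ℝ) ≤ (d:ℝ) := by exact_mod_cast hd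
  have hdpos : (0:ℝ) < (d:ℝ) := by linarith
  have hid := ident_jobs (π := π) hd hstat
  have hnl : (0:ℝ) ≤ (n:ℝ) * lam := by positivity
  have hlower : ∀ X ∈ stateSpace n d,
      π X * ((d:ℝ)⁻¹ * (if 0 < n - busy d X then (1:ℝ) else 0))
      ≤ π X * ((if d ≤ n - busy d X then ((d:ℝ))⁻¹ else 0)
          + (if 0 < n - busy d X ∧ n - busy d X < d
              then (((n - busy d X : ℕ)):ℝ)⁻¹ else 0)) := by
    intro X _
    apply mul_le_mul_of_nonneg_left _ (hprob.1 X)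
    rcases Nat.lt_or_ge (n - busy d X) d with hlt | hge
    · rcases Nat.eq_zero_or_pos (n - busy d X) with h0 | h0
      · rw [if_neg (by omega), if_neg (by omega), if_neg (by omega)]
        norm_num
      · rw [if_pos h0, if_neg (by omega), if_pos ⟨h0, hlt⟩]
        have hI1 : (1:ℝ) ≤ (((n - busy d X : ℕ)):ℝ) := by exact_mod_cast h0
        have hId : (((n - busy d X : ℕ)):ℝ) ≤ (d:ℝ) := by exact_mod_cast le_of_lt hlt
        have := one_div_le_one_div_of_le (by linarith : (0:ℝ) < (((n - busy d X : ℕ)):ℝ)) hId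
        rw [one_div, one_div] at this
        linarith
    · rw [if_pos (by omega : 0 < n - busy d X), if_pos hge, if_neg (by omega)]
      norm_num
  have hupper : ∀ X ∈ stateSpace n d,
      π X * ((if d ≤ n - busy d X then ((d:ℝ))⁻¹ else 0)
          + (if 0 < n - busy d X ∧ n - busy d X < d
              then (((n - busy d X : ℕ)):ℝ)⁻¹ else 0))
      ≤ π X * ((d:ℝ)⁻¹ * (if 0 < n - busy d X then (1:ℝ) else 0)
          + (if 0 < n - busy d X ∧ n - busy d X < d then (1:ℝ) else 0)) := by
    intro X _
    apply mul_le_mul_of_nonneg_left _ (hprob.1 X)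
    rcases Nat.lt_or_ge (n - busy d X) d with hlt | hge
    · rcases Nat.eq_zero_or_pos (n - busy d X) with h0 | h0
      · rw [if_neg (by omega), if_neg (by omega), if_neg (by omega), if_neg (by omega)]
        norm_num
      · rw [if_neg (by omega), if_pos ⟨h0, hlt⟩, if_pos h0, if_pos ⟨h0, hlt⟩]
        have hI1 : (1:ℝ) ≤ (((n - busy d X : ℕ)):ℝ) := by exact_mod_cast h0
        have hinv : (((n - busy d X : ℕ)):ℝ)⁻¹ ≤ 1 := by
          rw [← one_div]
          rw [div_le_one (by linarith)]
          exact hI1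
        have : (0:ℝ) ≤ (d:ℝ)⁻¹ := by positivity
        linarith
    · rw [if_pos hge, if_neg (by omega), if_pos (by omega : 0 < n - busy d X), if_neg (by omega)]
      norm_num
  have hsum_lower : (1 - P0v n d π) * (d:ℝ)⁻¹
      ≤ ∑ X ∈ stateSpace n d,
        π X * ((if d ≤ n - busy d X then ((d:ℝ))⁻¹ else 0)
          + (if 0 < n - busy d X ∧ n - busy d X < d
              then (((n - busy d X : ℕ)):ℝ)⁻¹ else 0)) := by
    have h1 := Finset.sum_le_sum hlower
    have h2 : ∑ X ∈ stateSpace n d,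
        π X * ((d:ℝ)⁻¹ * (if 0 < n - busy d X then (1:ℝ) else 0))
        = (d:ℝ)⁻¹ * ∑ X ∈ stateSpace n d,
            π X * (if 0 < n - busy d X then (1:ℝ) else 0) := by
      rw [Finset.mul_sum]
      apply Finset.sum_congr rfl
      intro X _
      ring
    rw [h2, one_minus_P0 hprob] at h1
    calc (1 - P0v n d π) * (d:ℝ)⁻¹ = (d:ℝ)⁻¹ * (1 - P0v n d π) := by ring
      _ ≤ _ := h1
  have hsum_upper : (∑ X ∈ stateSpace n d,
        π X * ((if d ≤ n - busy d X then ((d:ℝ))⁻¹ else 0)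
          + (if 0 < n - busy d X ∧ n - busy d X < d
              then (((n - busy d X : ℕ)):ℝ)⁻¹ else 0)))
      ≤ (1 - P0v n d π) * (d:ℝ)⁻¹ + PAv n d π := by
    have h1 := Finset.sum_le_sum hupper
    have h2 : ∑ X ∈ stateSpace n d,
        π X * ((d:ℝ)⁻¹ * (if 0 < n - busy d X then (1:ℝ) else 0)
          + (if 0 < n - busy d X ∧ n - busy d X < d then (1:ℝ) else 0))
        = (d:ℝ)⁻¹ * (∑ X ∈ stateSpace n d,
            π X * (if 0 < n - busy d X then (1:ℝ) else 0)) + PAv n d π := by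
      rw [PAv, Finset.mul_sum, ← Finset.sum_add_distrib]
      apply Finset.sum_congr rfl
      intro X _
      ring
    rw [h2, one_minus_P0 hprob] at h1
    calc (∑ X ∈ stateSpace n d,
        π X * ((if d ≤ n - busy d X then ((d:ℝ))⁻¹ else 0)
          + (if 0 < n - busy d X ∧ n - busy d X < d
              then (((n - busy d X : ℕ)):ℝ)⁻¹ else 0)))
        ≤ (d:ℝ)⁻¹ * (1 - P0v n d π) + PAv n d π := h1
      _ = (1 - P0v n d π) * (d:ℝ)⁻¹ + PAv n d π := by ring
  constructor
  · calc (n:ℝ)*lam*((1 - P0v n d π) * (d:ℝ)⁻¹)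
        ≤ (n:ℝ)*lam* (∑ X ∈ stateSpace n d,
          π X * ((if d ≤ n - busy d X then ((d:ℝ))⁻¹ else 0)
            + (if 0 < n - busy d X ∧ n - busy d X < d
                then (((n - busy d X : ℕ)):ℝ)⁻¹ else 0))) :=
          mul_le_mul_of_nonneg_left hsum_lower hnl
      _ = EJv n d π := by rw [EJv, hid]
  · calc EJv n d π
        = (n:ℝ)*lam* (∑ X ∈ stateSpace n d,
          π X * ((if d ≤ n - busy d X then ((d:ℝ))⁻¹ else 0)
            + (if 0 < n - busy d X ∧ n - busy d X < d
                then (((n - busy d X : ℕ)):ℝ)⁻¹ else 0))) := by rw [EJv, hid]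
      _ ≤ (n:ℝ)*lam*((1 - P0v n d π) * (d:ℝ)⁻¹ + PAv n d π) :=
          mul_le_mul_of_nonneg_left hsum_upper hnl

end Stmt9Aux

namespace Stmt9Aux

lemma lam_lower (α β : ℝ) (hα0 : 0 ≤ α) (hβ : 0 < β) (hβ1 : α = 0 → β < 1) :
    ∃ c₀ : ℝ, 0 < c₀ ∧ ∃ N₁ : ℕ, ∀ n : ℕ, N₁ ≤ n → c₀ ≤ 1 - β * (n:ℝ)^(-α) := by
  by_cases hα : α = 0
  · refine ⟨1 - β, by linarith [hβ1 hα], 1, fun n hn => ?_⟩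
    subst hα
    rw [neg_zero, Real.rpow_zero, mul_one]
  · have hαpos : 0 < α := lt_of_le_of_ne hα0 (Ne.symm hα)
    have h1 : Filter.Tendsto (fun x : ℝ => x ^ (-α)) Filter.atTop (nhds 0) :=
      tendsto_rpow_neg_atTop hαpos
    have h2 : Filter.Tendsto (fun n : ℕ => ((n:ℝ)) ^ (-α)) Filter.atTop (nhds 0) :=
      h1.comp (tendsto_natCast_atTop_atTop (R := ℝ))
    have h3 : Filter.Tendsto (fun n : ℕ => β * ((n:ℝ)) ^ (-α)) Filter.atTop (nhds 0) := by
      have := h2.const_mul β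
      simpa using this
    have hev : ∀ᶠ n : ℕ in Filter.atTop, β * ((n:ℝ)) ^ (-α) < 1/2 :=
      h3.eventually (eventually_lt_nhds (by norm_num : (0:ℝ) < 1/2))
    obtain ⟨N₁, hN₁⟩ := Filter.eventually_atTop.mp hev
    refine ⟨1/2, by norm_num, N₁, fun n hn => ?_⟩
    have := hN₁ n hn
    linarith

end Stmt9Aux


set_option maxHeartbeats 2000000 in
open Stmt9Aux in
/-- Theorem 1: with `λ(n) = 1 − β·n^{−α}`, `α ∈ [0,1)`, `β > 0` (and `β < 1` if `α = 0`),
and `π_n` a stationary distribution of the greedy full-access chain for each `n ≥ d`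
(in the regime `λ(n) ≥ 0`), the blocking probability `P_b(n)` converges to zero at rate
`O(n^{−1/2})` and the mean response time `E[D_n]` converges to `1/d` at rate `O(n^{−1})`. -/
theorem stmt9 (d : ℕ) (hd : 1 ≤ d) (α β : ℝ) (hα0 : 0 ≤ α) (hα1 : α < 1) (hβ : 0 < β)
    (hβ1 : α = 0 → β < 1) (π : (n : ℕ) → (Fin (d + 1) → ℕ) → ℝ)
    (hπ : ∀ n : ℕ, d ≤ n → 0 ≤ 1 - β * (n : ℝ) ^ (-α) →
      IsProbOn n d (π n) ∧ IsStationaryFull n d (1 - β * (n : ℝ) ^ (-α)) (π n)) :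
    ∃ C > (0 : ℝ), ∃ N : ℕ, ∀ n ≥ N,
      expec n d (π n) (fun X => if n - busy d X = 0 then (1 : ℝ) else 0) ≤
          C * (n : ℝ) ^ (-(1 : ℝ) / 2) ∧
        |expec n d (π n) (fun X => (jobs d X : ℝ)) /
              ((n : ℝ) * (1 - β * (n : ℝ) ^ (-α)) *
                (1 - expec n d (π n)
                  (fun X => if n - busy d X = 0 then (1 : ℝ) else 0))) -
            1 / d| ≤ C * (n : ℝ)⁻¹ := by
  obtain ⟨c₀, hc₀, N₁, hN₁⟩ := lam_lower α β hα0 hβ hβ1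
  have hc₀1 : c₀ ≤ 1 := by
    have := hN₁ (max N₁ 1) (le_max_left _ _)
    have hnn : (0:ℝ) ≤ β * ((max N₁ 1 : ℕ):ℝ) ^ (-α) :=
      mul_nonneg hβ.le (Real.rpow_nonneg (Nat.cast_nonneg _) _)
    linarith
  set C : ℝ := 16*(d:ℝ) + 2*(d:ℝ)/c₀ + 1 with hC
  have hCpos : 0 < C := by positivity
  refine ⟨C, hCpos, max N₁ (4096*(d+1)*(d+1)), fun n hn => ?_⟩
  -- basic size facts
  have hnN₁ : N₁ ≤ n := le_trans (le_max_left _ _) hn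
  have hnbig : 4096*(d+1)*(d+1) ≤ n := le_trans (le_max_right _ _) hn
  have hn1 : 1 ≤ n := by nlinarith [Nat.le_refl d]
  have hdn : d ≤ n := by nlinarith
  have hn0 : 0 < n := hn1
  have hnR : (0:ℝ) < (n:ℝ) := by exact_mod_cast hn0
  set lam : ℝ := 1 - β * (n : ℝ) ^ (-α) with hlamdef
  have hlamc₀ : c₀ ≤ lam := hN₁ n hnN₁
  have hlampos : 0 < lam := lt_of_lt_of_le hc₀ hlamc₀
  have hlam0 : 0 ≤ lam := hlampos.le
  have hlam1 : lam ≤ 1 := by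
    have hnn : (0:ℝ) ≤ β * ((n:ℕ):ℝ) ^ (-α) :=
      mul_nonneg hβ.le (Real.rpow_nonneg (Nat.cast_nonneg _) _)
    rw [hlamdef]
    linarith
  obtain ⟨hprob, hstat⟩ := hπ n hdn (by rw [← hlamdef]; linarith)
  -- square root facts
  set s : ℕ := Nat.sqrt n with hs
  have hs64 : 64*(d+1) ≤ s := by
    rw [hs, Nat.le_sqrt]
    nlinarith
  have hsR : (64:ℝ)*(d:ℝ) + 64 ≤ (s:ℝ) := by
    have : (64*(d+1) : ℕ) ≤ s := hs64
    have := Nat.cast_le (α := ℝ).mpr this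
    push_cast at this
    linarith
  have hd1 : (1:ℝ) ≤ (d:ℝ) := by exact_mod_cast hd
  have hssq : (s:ℝ) * (s:ℝ) ≤ (n:ℝ) := by
    have h := Nat.sqrt_le' n
    rw [pow_two] at h
    exact_mod_cast h
  have hsn : (s:ℝ) ≤ (n:ℝ) := by
    have := Nat.sqrt_le_self n
    exact_mod_cast this
  have hsqrt_ge : (s:ℝ) ≤ Real.sqrt n := by
    rw [show ((s:ℝ)) = Real.sqrt ((s:ℝ)^2) from (Real.sqrt_sq (Nat.cast_nonneg s)).symm]
    apply Real.sqrt_le_sqrt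
    nlinarith
  have hsqrt_le : Real.sqrt n ≤ (s:ℝ) + 1 := by
    have h1 : (n:ℝ) ≤ ((s:ℝ)+1)^2 := by
      have h0 := Nat.lt_succ_sqrt' n
      rw [pow_two] at h0
      simp only [Nat.succ_eq_add_one] at h0
      rw [← hs] at h0
      have h2 : (n:ℕ) ≤ (s+1)*(s+1) := by omega
      have h3 := Nat.cast_le (α := ℝ).mpr h2
      push_cast at h3
      nlinarith
    calc Real.sqrt n ≤ Real.sqrt (((s:ℝ)+1)^2) := Real.sqrt_le_sqrt h1
      _ = (s:ℝ)+1 := Real.sqrt_sq (by positivity)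
  have hsqrtpos : 0 < Real.sqrt n := lt_of_lt_of_le (by linarith) hsqrt_ge
  -- window count
  set M : ℕ := s / (4*d) with hM
  have hMub : (M:ℝ) ≤ (s:ℝ)/(4*(d:ℝ)) := by
    have h1 : M * (4*d) ≤ s := Nat.div_mul_le_self s (4*d)
    have h2 := Nat.cast_le (α := ℝ).mpr h1
    push_cast at h2
    rw [le_div_iff₀ (by positivity)]
    linarith
  have hMlb : (s:ℝ)/(4*(d:ℝ)) ≤ (M:ℝ) + 1 := by
    have h1 : s < (M+1) * (4*d) := by
      have h0 : s/(4*d) < M+1 := by omega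
      exact (Nat.div_lt_iff_lt_mul (by omega : 0 < 4*d)).mp h0
    have h2 := Nat.cast_le (α := ℝ).mpr (Nat.le_of_lt h1)
    push_cast at h2
    rw [div_le_iff₀ (by positivity)]
    linarith
  have hM2 : ((M:ℝ)+2) ≤ (s:ℝ)/(2*(d:ℝ)) := by
    rw [le_div_iff₀ (by positivity)]
    have : ((M:ℝ)+2) * (2*(d:ℝ)) = (M:ℝ)*(2*d) + 4*d := by ring
    rw [this]
    have h1 : (M:ℝ)*(2*(d:ℝ)) ≤ (s:ℝ)/2 := by
      have := mul_le_mul_of_nonneg_right hMub (by positivity : (0:ℝ) ≤ 2*(d:ℝ))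
      calc (M:ℝ)*(2*(d:ℝ)) ≤ (s:ℝ)/(4*(d:ℝ)) * (2*(d:ℝ)) := this
        _ = (s:ℝ)/2 := by field_simp; ring
    linarith
  have hcase : ((M:ℝ)+2)*(d:ℝ) ≤ (n:ℝ)/2 := by
    have h1 : ((M:ℝ)+2)*(d:ℝ) ≤ (s:ℝ)/(2*(d:ℝ)) * (d:ℝ) :=
      mul_le_mul_of_nonneg_right hM2 (by positivity)
    have h2 : (s:ℝ)/(2*(d:ℝ)) * (d:ℝ) = (s:ℝ)/2 := by field_simp
    rw [h2] at h1
    linarith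
  have hsum4 : 4*((M:ℝ)+2)^2*(d:ℝ) ≤ (n:ℝ) := by
    have h1 : ((M:ℝ)+2)^2 ≤ ((s:ℝ)/(2*(d:ℝ)))^2 := by
      apply sq_le_sq'
      · nlinarith [Nat.cast_nonneg (α := ℝ) M]
      · exact hM2
    have h2 : ((s:ℝ)/(2*(d:ℝ)))^2 = (s:ℝ)^2/(4*(d:ℝ)^2) := by
      rw [div_pow]
      congr 1
      ring
    have h3 : 4*((M:ℝ)+2)^2*(d:ℝ) ≤ 4*((s:ℝ)^2/(4*(d:ℝ)^2))*(d:ℝ) := by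
      have := mul_le_mul_of_nonneg_right
        (mul_le_mul_of_nonneg_left (h2 ▸ h1) (by norm_num : (0:ℝ) ≤ 4))
        (by positivity : (0:ℝ) ≤ (d:ℝ))
      linarith [this]
    have h4 : 4*((s:ℝ)^2/(4*(d:ℝ)^2))*(d:ℝ) = (s:ℝ)^2/(d:ℝ) := by
      field_simp
    have h5 : (s:ℝ)^2/(d:ℝ) ≤ (s:ℝ)^2 := by
      apply div_le_self (by positivity) hd1
    nlinarith
  -- main window bound
  have hW0 := W0_small hd hlam0 hlam1 hlampos hn0 hprob hstat M hcase hsum4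
  have hP0W : P0v n d (π n) = lam * Wv n d (π n) 0 := P0_eq_lam_W0 hd hn0 hprob hstat
  have hW0nn : 0 ≤ Wv n d (π n) 0 := Wv_nonneg hprob 0
  have hP0le : P0v n d (π n) ≤ 2/((M:ℝ)+1) := by
    rw [hP0W]
    calc lam * Wv n d (π n) 0 ≤ 1 * Wv n d (π n) 0 :=
        mul_le_mul_of_nonneg_right hlam1 hW0nn
      _ = Wv n d (π n) 0 := one_mul _
      _ ≤ 2/((M:ℝ)+1) := hW0
  have hMpos : (0:ℝ) < (M:ℝ)+1 := by positivity
  have hMsqrt : Real.sqrt n / (8*(d:ℝ)) ≤ (M:ℝ)+1 := by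
    calc Real.sqrt n / (8*(d:ℝ)) ≤ ((s:ℝ)+1)/(8*(d:ℝ)) :=
          (div_le_div_iff_of_pos_right (by positivity)).mpr hsqrt_le
      _ ≤ (s:ℝ)/(4*(d:ℝ)) := by
          rw [div_le_div_iff₀ (by positivity) (by positivity)]
          nlinarith
      _ ≤ (M:ℝ)+1 := hMlb
  have hsd : (0:ℝ) < Real.sqrt n / (8*(d:ℝ)) := by positivity
  have hP0sqrt : P0v n d (π n) ≤ 16*(d:ℝ)/Real.sqrt n := by
    calc P0v n d (π n) ≤ 2/((M:ℝ)+1) := hP0le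
      _ ≤ 2/(Real.sqrt n/(8*(d:ℝ))) :=
          div_le_div_of_nonneg_left (by norm_num) hsd hMsqrt
      _ = 16*(d:ℝ)/Real.sqrt n := by
          rw [div_div_eq_mul_div]
          ring
  have hexP0 : expec n d (π n) (fun X => if n - busy d X = 0 then (1:ℝ) else 0)
      = P0v n d (π n) := rfl
  have hexEJ : expec n d (π n) (fun X => (jobs d X : ℝ)) = EJv n d (π n) := rfl
  have hCd : 16*(d:ℝ) ≤ C := by
    rw [hC]
    have : 0 < 2*(d:ℝ)/c₀ := by positivity
    linarith
  constructor
  · -- first bound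
    have hrw : ((n:ℝ)) ^ (-(1:ℝ)/2) = (Real.sqrt n)⁻¹ := by
      rw [neg_div, Real.rpow_neg (Nat.cast_nonneg n)]
      congr 1
      rw [Real.sqrt_eq_rpow]
    rw [hexP0, hrw]
    calc P0v n d (π n) ≤ 16*(d:ℝ)/Real.sqrt n := hP0sqrt
      _ = 16*(d:ℝ) * (Real.sqrt n)⁻¹ := by ring
      _ ≤ C * (Real.sqrt n)⁻¹ := by
          apply mul_le_mul_of_nonneg_right hCd (by positivity)
  · -- second bound
    have hP0half : P0v n d (π n) ≤ 1/2 := by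
      calc P0v n d (π n) ≤ 16*(d:ℝ)/Real.sqrt n := hP0sqrt
        _ ≤ 1/2 := by
            rw [div_le_iff₀ hsqrtpos]
            have h32 : 32*(d:ℝ) ≤ Real.sqrt n := by
              calc 32*(d:ℝ) ≤ (s:ℝ) := by linarith
                _ ≤ Real.sqrt n := hsqrt_ge
            linarith
    have h1mP0 : (1:ℝ)/2 ≤ 1 - P0v n d (π n) := by linarith
    have hnl : (0:ℝ) < (n:ℝ)*lam := by positivity
    have hPAd : PAv n d (π n) ≤ (d:ℝ)/((n:ℝ)*lam) := by
      have hh := PA_le hd hlam0 hprob hstat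
      rw [le_div_iff₀ hnl]
      calc PAv n d (π n) * ((n:ℝ)*lam) = (n:ℝ)*lam*PAv n d (π n) := by ring
        _ ≤ d := hh
    obtain ⟨hEJl, hEJu⟩ := EJ_bounds hd hlam0 hprob hstat
    have hPAnn : 0 ≤ PAv n d (π n) := PAv_nonneg hprob
    have hD : (0:ℝ) < (n:ℝ)*lam*(1 - P0v n d (π n)) := by
      apply mul_pos hnl
      linarith
    have hlow : 1/(d:ℝ) ≤ EJv n d (π n) / ((n:ℝ)*lam*(1 - P0v n d (π n))) := by
      rw [le_div_iff₀ hD]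
      have hexp : 1/(d:ℝ) * ((n:ℝ)*lam*(1 - P0v n d (π n)))
          = (n:ℝ)*lam*((1 - P0v n d (π n)) * (d:ℝ)⁻¹) := by
        rw [one_div]
        ring
      rw [hexp]
      exact hEJl
    have hup : EJv n d (π n) / ((n:ℝ)*lam*(1 - P0v n d (π n)))
        ≤ 1/(d:ℝ) + 2*PAv n d (π n) := by
      rw [div_le_iff₀ hD]
      have hexp2 : (1/(d:ℝ) + 2*PAv n d (π n)) * ((n:ℝ)*lam*(1 - P0v n d (π n)))
          = (n:ℝ)*lam*((1 - P0v n d (π n))*(d:ℝ)⁻¹)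
            + 2*PAv n d (π n)*((n:ℝ)*lam)*(1 - P0v n d (π n)) := by
        rw [one_div]
        ring
      rw [hexp2]
      have hprod : (0:ℝ) ≤ (PAv n d (π n) * ((n:ℝ)*lam))
          * (2*(1 - P0v n d (π n)) - 1) :=
        mul_nonneg (mul_nonneg hPAnn hnl.le) (by linarith)
      have hEJu2 : EJv n d (π n) ≤ (n:ℝ)*lam*((1 - P0v n d (π n))*(d:ℝ)⁻¹)
          + (n:ℝ)*lam*PAv n d (π n) := by
        have hex3 : (n:ℝ)*lam*((1 - P0v n d (π n))*(d:ℝ)⁻¹ + PAv n d (π n))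
            = (n:ℝ)*lam*((1 - P0v n d (π n))*(d:ℝ)⁻¹) + (n:ℝ)*lam*PAv n d (π n) := by
          ring
        rw [← hex3]
        exact hEJu
      nlinarith [hprod]
    rw [hexEJ, hexP0]
    have habs : |EJv n d (π n) / ((n:ℝ)*lam*(1 - P0v n d (π n))) - 1/(d:ℝ)|
        ≤ 2*PAv n d (π n) := by
      rw [abs_of_nonneg (by linarith)]
      linarith
    calc |EJv n d (π n) / ((n:ℝ)*lam*(1 - P0v n d (π n))) - 1/(d:ℝ)|
        ≤ 2*PAv n d (π n) := habs
      _ ≤ 2*((d:ℝ)/((n:ℝ)*lam)) := by linarith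
      _ ≤ 2*((d:ℝ)/((n:ℝ)*c₀)) := by
          have h1 : (0:ℝ) < (n:ℝ)*c₀ := by positivity
          have h2 : (n:ℝ)*c₀ ≤ (n:ℝ)*lam :=
            mul_le_mul_of_nonneg_left hlamc₀ hnR.le
          have := div_le_div_of_nonneg_left (by positivity : (0:ℝ) ≤ (d:ℝ)) h1 h2
          linarith
      _ = (2*(d:ℝ)/c₀) * (n:ℝ)⁻¹ := by
          field_simp
      _ ≤ C * (n:ℝ)⁻¹ := by
          apply mul_le_mul_of_nonneg_right _ (by positivity)
          rw [hC]
          linarith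
end

section
/- Let n, k, d, B be integers with 1 ≤ d ≤ k ≤ n and 0 ≤ B ≤ n, let I := n − B, and let ε be a real number with 0 < ε ≤ 1 such that B ≤ (1 − ε)·n. Then Σ_{i=0}^{d−1} C(I, i)·C(B, k−i) / C(n, k) ≤ d·k^d·(1 − ε)^{k−d}, where C(·,·) denotes binomial coefficients (equal to 0 when the lower index exceeds the upper). (Lemma 3, hypergeometric form: if the fraction of busy servers q_1 = B/n satisfies q_1 ≤ 1 − ε, then the probability 1 − A_d of finding fewer than d idle servers among a uniformly random k-subset of n servers is at most d·k^d·(1−ε)^{k−d}.) -/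
open Finset

lemma descmul (n m i : ℕ) :
    Nat.descFactorial n (m + i) = Nat.descFactorial n m * Nat.descFactorial (n - m) i := by
  simp only [Nat.descFactorial_eq_prod_range]
  rw [Finset.prod_range_add]
  congr 1
  refine Finset.prod_congr rfl fun j _ => ?_
  omega

lemma key_nat (n k i m B : ℕ) (hk : k = m + i) (hkn : k ≤ n) (hBn : B ≤ n) :
    (n - B).choose i * B.choose m * n ^ m ≤ k ^ i * B ^ m * n.choose k := by
  by_cases hiI : i ≤ n - B
  swap
  · rw [Nat.choose_eq_zero_of_lt (show n - B < i by omega)]; simp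
  by_cases hmB : m ≤ B
  swap
  · rw [Nat.choose_eq_zero_of_lt (show B < m by omega)]; simp
  have h1 : ∏ j ∈ range m, ((B - j) * n) ≤ ∏ j ∈ range m, (B * (n - j)) := by
    refine Finset.prod_le_prod (fun _ _ => Nat.zero_le _) fun j hj => ?_
    have hj' : j < m := mem_range.mp hj
    have hjB : j ≤ B := by omega
    calc (B - j) * n = B * n - j * n := by rw [Nat.sub_mul]
      _ ≤ B * n - B * j := by
          refine Nat.sub_le_sub_left ?_ _
          calc B * j = j * B := mul_comm _ _
            _ ≤ j * n := Nat.mul_le_mul_left _ hBn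
      _ = B * (n - j) := by rw [Nat.mul_sub]
  have h2 : ∏ j ∈ range i, ((k - j) * (n - B - j)) ≤
      ∏ j ∈ range i, (k * (i - j) * (n - m - j)) := by
    refine Finset.prod_le_prod (fun _ _ => Nat.zero_le _) fun j hj => ?_
    have hj' : j < i := mem_range.mp hj
    refine Nat.mul_le_mul ?_ (by omega)
    calc k - j ≤ k := Nat.sub_le _ _
      _ = k * 1 := (mul_one _).symm
      _ ≤ k * (i - j) := Nat.mul_le_mul_left _ (by omega)
  have e1 : ∏ j ∈ range m, ((B - j) * n) = Nat.descFactorial B m * n ^ m := by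
    rw [Finset.prod_mul_distrib, Finset.prod_const, card_range,
      Nat.descFactorial_eq_prod_range]
  have e2 : ∏ j ∈ range m, (B * (n - j)) = B ^ m * Nat.descFactorial n m := by
    rw [Finset.prod_mul_distrib, Finset.prod_const, card_range,
      Nat.descFactorial_eq_prod_range]
  have e3 : ∏ j ∈ range i, ((k - j) * (n - B - j)) =
      Nat.descFactorial k i * Nat.descFactorial (n - B) i := by
    rw [Finset.prod_mul_distrib, Nat.descFactorial_eq_prod_range,
      Nat.descFactorial_eq_prod_range]
  have e4 : ∏ j ∈ range i, (k * (i - j) * (n - m - j)) =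
      k ^ i * Nat.factorial i * Nat.descFactorial (n - m) i := by
    rw [Finset.prod_mul_distrib, Finset.prod_mul_distrib, Finset.prod_const, card_range,
      ← Nat.descFactorial_eq_prod_range, ← Nat.descFactorial_eq_prod_range,
      Nat.descFactorial_self]
  have big : Nat.descFactorial k i * Nat.descFactorial (n - B) i *
      (Nat.descFactorial B m * n ^ m) ≤
      k ^ i * Nat.factorial i * Nat.descFactorial (n - m) i *
        (B ^ m * Nat.descFactorial n m) := by
    rw [← e1, ← e2, ← e3, ← e4]
    exact Nat.mul_le_mul h2 h1
  have hik : i ≤ k := by omega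
  have hkfac : k.choose i * Nat.factorial i * Nat.factorial m = Nat.factorial k := by
    have := Nat.choose_mul_factorial_mul_factorial hik
    rwa [show k - i = m by omega] at this
  have h5 : Nat.descFactorial n m * Nat.descFactorial (n - m) i =
      Nat.factorial k * n.choose k := by
    rw [← descmul, ← hk, Nat.descFactorial_eq_factorial_mul_choose]
  refine Nat.le_of_mul_le_mul_left ?_
    (show 0 < Nat.factorial i * Nat.factorial k from by positivity)
  calc Nat.factorial i * Nat.factorial k * ((n - B).choose i * B.choose m * n ^ m)
      = Nat.descFactorial k i * Nat.descFactorial (n - B) i *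
          (Nat.descFactorial B m * n ^ m) := by
        rw [Nat.descFactorial_eq_factorial_mul_choose k i,
          Nat.descFactorial_eq_factorial_mul_choose (n - B) i,
          Nat.descFactorial_eq_factorial_mul_choose B m, ← hkfac]
        ring
    _ ≤ k ^ i * Nat.factorial i * Nat.descFactorial (n - m) i *
          (B ^ m * Nat.descFactorial n m) := big
    _ = k ^ i * Nat.factorial i * B ^ m *
          (Nat.descFactorial n m * Nat.descFactorial (n - m) i) := by ring
    _ = Nat.factorial i * Nat.factorial k * (k ^ i * B ^ m * n.choose k) := by
        rw [h5]; ring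

/-- Lemma 3, hypergeometric form: if `1 ≤ d ≤ k ≤ n`, `0 ≤ B ≤ n`, `I = n − B`,
`0 < ε ≤ 1` and `B ≤ (1 − ε)·n`, then
`∑_{i=0}^{d−1} C(I,i)·C(B,k−i)/C(n,k) ≤ d·k^d·(1−ε)^{k−d}`. -/
theorem stmt11 (n k d B : ℕ) (hd : 1 ≤ d) (hdk : d ≤ k) (hkn : k ≤ n) (hBn : B ≤ n)
    (ε : ℝ) (hε0 : 0 < ε) (hε1 : ε ≤ 1) (hB : (B : ℝ) ≤ (1 - ε) * n) :
    ∑ i ∈ Finset.range d, ((n - B).choose i * B.choose (k - i) : ℝ) / (n.choose k : ℝ) ≤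
      d * (k : ℝ) ^ d * (1 - ε) ^ (k - d) := by
  have hn : 0 < n := by omega
  have hn' : (0 : ℝ) < n := by exact_mod_cast hn
  have hC : (0 : ℝ) < n.choose k := by exact_mod_cast Nat.choose_pos hkn
  have hq0 : (0 : ℝ) ≤ (B : ℝ) / n := by positivity
  have hq1 : (B : ℝ) / n ≤ 1 - ε := (div_le_iff₀ hn').mpr hB
  have hε0' : (0 : ℝ) ≤ 1 - ε := by linarith
  have hε1' : (1 : ℝ) - ε ≤ 1 := by linarith
  have hk1 : (1 : ℝ) ≤ k := by exact_mod_cast le_trans hd hdk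
  have hterm : ∀ i ∈ Finset.range d,
      ((n - B).choose i * B.choose (k - i) : ℝ) / (n.choose k : ℝ) ≤
        (k : ℝ) ^ d * (1 - ε) ^ (k - d) := by
    intro i hi
    have hid : i < d := Finset.mem_range.mp hi
    have hnat := key_nat n k i (k - i) B (by omega) hkn hBn
    have hcast : (((n - B).choose i * B.choose (k - i) : ℕ) : ℝ) * (n : ℝ) ^ (k - i) ≤
        (k : ℝ) ^ i * (B : ℝ) ^ (k - i) * (n.choose k : ℝ) := by exact_mod_cast hnat
    have h1 : ((n - B).choose i * B.choose (k - i) : ℝ) / (n.choose k : ℝ) ≤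
        (k : ℝ) ^ i * ((B : ℝ) / n) ^ (k - i) := by
      rw [div_pow, ← mul_div_assoc, div_le_div_iff₀ hC (by positivity)]
      calc ((n - B).choose i * B.choose (k - i) : ℝ) * (n : ℝ) ^ (k - i)
          ≤ (k : ℝ) ^ i * (B : ℝ) ^ (k - i) * (n.choose k : ℝ) := by exact_mod_cast hcast
        _ = (k : ℝ) ^ i * (B : ℝ) ^ (k - i) * (n.choose k : ℝ) := rfl
    refine h1.trans (mul_le_mul ?_ ?_ (by positivity) (by positivity))
    · exact pow_le_pow_right₀ hk1 (le_of_lt hid)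
    · calc ((B : ℝ) / n) ^ (k - i) ≤ (1 - ε) ^ (k - i) := pow_le_pow_left₀ hq0 hq1 _
        _ ≤ (1 - ε) ^ (k - d) := pow_le_pow_of_le_one hε0' hε1' (by omega)
  calc ∑ i ∈ Finset.range d, ((n - B).choose i * B.choose (k - i) : ℝ) / (n.choose k : ℝ)
      ≤ ∑ _i ∈ Finset.range d, (k : ℝ) ^ d * (1 - ε) ^ (k - d) :=
        Finset.sum_le_sum hterm
    _ = d * (k : ℝ) ^ d * (1 - ε) ^ (k - d) := by
        rw [Finset.sum_const, Finset.card_range, nsmul_eq_mul]; ring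
end

section
/- Suppose λ = 1 − β·n^{−α} ≥ 0 with α ∈ [0,1) and 0 < β ≤ 2·n^α. Then for every stationary distribution π of the greedy limited-access chain: E_π[(1 − A_d(X))·(λ − d·x_d)] ≤ λ·d·k^d·(1 − β/(2·n^α))^{k−d} + d·E_π[(Σ_{i=1}^d x_i)·1(q_1 > 1 − β/(2·n^α))], where x_i = X_i/n and q_1 = B(X)/n. (Lemma 4.) -/
open Finset

lemma desc_mul_le (B n : ℕ) (hB : B ≤ n) : ∀ a : ℕ,
    B.descFactorial a * n ^ a ≤ B ^ a * n.descFactorial a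
  | 0 => le_refl 1
  | (a + 1) => by
    have h1 : (B - a) * n ≤ B * (n - a) := by
      calc (B - a) * n = B * n - a * n := Nat.sub_mul _ _ _
        _ ≤ B * n - a * B := Nat.sub_le_sub_left (Nat.mul_le_mul le_rfl hB) _
        _ = B * (n - a) := by rw [Nat.mul_comm B n, ← Nat.sub_mul, Nat.mul_comm]
    rw [Nat.descFactorial_succ, Nat.descFactorial_succ, pow_succ, pow_succ]
    calc (B - a) * B.descFactorial a * (n ^ a * n)
        = ((B - a) * n) * (B.descFactorial a * n ^ a) := by ring
      _ ≤ (B * (n - a)) * (B ^ a * n.descFactorial a) :=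
          Nat.mul_le_mul h1 (desc_mul_le B n hB a)
      _ = B ^ a * B * ((n - a) * n.descFactorial a) := by ring

lemma asamp_nat_bound (n k j B : ℕ) (hjk : j ≤ k) (hkn : k ≤ n) (hB : B ≤ n) :
    (n - B).choose j * B.choose (k - j) * n ^ (k - j) ≤
      k ^ j * B ^ (k - j) * n.choose k := by
  set a := k - j with ha
  by_cases hab : a ≤ B
  · have hI : n - B ≤ n - a := Nat.sub_le_sub_left hab n
    have hak : a ≤ k := Nat.sub_le k j
    have hkj : k - a = j := by omega
    have hCna : 0 < n.choose a := Nat.choose_pos (le_trans hak hkn)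
    refine Nat.le_of_mul_le_mul_left ?_ hCna
    have step1 : (n - B).choose j ≤ (n - a).choose j := Nat.choose_le_choose j hI
    have idty : n.choose k * k.choose a = n.choose a * (n - a).choose j := by
      rw [← hkj]; exact Nat.choose_mul hak
    have step2 : k.choose a * (B.descFactorial a * n ^ a) ≤
        k ^ j * (B ^ a * n.descFactorial a) :=
      Nat.mul_le_mul (by rw [ha, Nat.choose_symm hjk]; exact Nat.choose_le_pow k j)
        (desc_mul_le B n hB a)
    have step2' : a.factorial * (k.choose a * (B.choose a * n ^ a)) ≤
        a.factorial * (k ^ j * (B ^ a * n.choose a)) := by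
      calc a.factorial * (k.choose a * (B.choose a * n ^ a))
          = k.choose a * ((a.factorial * B.choose a) * n ^ a) := by ring
        _ = k.choose a * (B.descFactorial a * n ^ a) := by
            rw [← Nat.descFactorial_eq_factorial_mul_choose]
        _ ≤ k ^ j * (B ^ a * n.descFactorial a) := step2
        _ = k ^ j * (B ^ a * (a.factorial * n.choose a)) := by
            rw [Nat.descFactorial_eq_factorial_mul_choose]
        _ = a.factorial * (k ^ j * (B ^ a * n.choose a)) := by ring
    have step2'' : k.choose a * (B.choose a * n ^ a) ≤ k ^ j * (B ^ a * n.choose a) :=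
      Nat.le_of_mul_le_mul_left step2' (Nat.factorial_pos a)
    calc n.choose a * ((n - B).choose j * B.choose a * n ^ a)
        ≤ n.choose a * ((n - a).choose j * B.choose a * n ^ a) :=
          Nat.mul_le_mul le_rfl (Nat.mul_le_mul (Nat.mul_le_mul step1 le_rfl) le_rfl)
      _ = (n.choose a * (n - a).choose j) * (B.choose a * n ^ a) := by ring
      _ = (n.choose k * k.choose a) * (B.choose a * n ^ a) := by rw [← idty]
      _ = n.choose k * (k.choose a * (B.choose a * n ^ a)) := by ring
      _ ≤ n.choose k * (k ^ j * (B ^ a * n.choose a)) := Nat.mul_le_mul le_rfl step2''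
      _ = n.choose a * (k ^ j * B ^ a * n.choose k) := by ring
  · have h0 : B.choose a = 0 := Nat.choose_eq_zero_of_lt (lt_of_not_ge hab)
    simp [h0]

lemma vander_sum_le (n k d B : ℕ) (hdk : d ≤ k) (hB : B ≤ n) :
    ∑ j ∈ Finset.range d, (n - B).choose j * B.choose (k - j) ≤ n.choose k := by
  have h : n.choose k = ∑ j ∈ Finset.range (k + 1), (n - B).choose j * B.choose (k - j) := by
    conv_lhs => rw [← Nat.sub_add_cancel hB]
    rw [Nat.add_choose_eq, Finset.Nat.sum_antidiagonal_eq_sum_range_succ_mk]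
  rw [h]
  exact Finset.sum_le_sum_of_subset (Finset.range_subset_range.mpr (by omega))



lemma asamp_real_bound (n k j d B : ℕ) (hjd : j < d) (hdk : d ≤ k) (hkn : k ≤ n)
    (hk1 : 1 ≤ k) (hB : B ≤ n) :
    ((n - B).choose j * B.choose (k - j) : ℝ) / (n.choose k : ℝ) ≤
      (k : ℝ) ^ d * ((B : ℝ) / n) ^ (k - d) := by
  have hn0 : 0 < n := lt_of_lt_of_le hk1 hkn
  have hnR : (0 : ℝ) < n := by exact_mod_cast hn0
  have hcR : (0 : ℝ) < (n.choose k : ℝ) := by exact_mod_cast Nat.choose_pos hkn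
  have hq0 : (0 : ℝ) ≤ (B : ℝ) / n := by positivity
  have hq1 : (B : ℝ) / n ≤ 1 := by
    rw [div_le_one hnR]; exact_mod_cast hB
  have hjk : j ≤ k := le_trans (le_of_lt hjd) hdk
  have step1 : ((n - B).choose j * B.choose (k - j) : ℝ) / (n.choose k : ℝ) ≤
      (k : ℝ) ^ j * ((B : ℝ) / n) ^ (k - j) := by
    have hnat := asamp_nat_bound n k j B hjk hkn hB
    rw [div_pow, ← mul_div_assoc, div_le_div_iff₀ hcR (by positivity)]
    exact_mod_cast hnat
  refine le_trans step1 (mul_le_mul ?_ ?_ (by positivity) (by positivity))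
  · exact pow_le_pow_right₀ (by exact_mod_cast hk1) (le_of_lt hjd)
  · exact pow_le_pow_of_le_one hq0 hq1 (by omega)

lemma busy_le_jobs (d : ℕ) (X : Fin (d + 1) → ℕ) : busy d X ≤ d * jobs d X := by
  unfold busy jobs
  rw [Finset.mul_sum]
  apply Finset.sum_le_sum
  intro i _
  rcases Nat.eq_zero_or_pos i.1 with h | h
  · simp [h]
  · rw [if_pos h]
    exact Nat.mul_le_mul (Nat.le_of_lt_succ i.2) le_rfl

lemma expec_le_const_add {n d : ℕ} {π F H : (Fin (d + 1) → ℕ) → ℝ} {c e : ℝ}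
    (hprob : IsProbOn n d π)
    (hpt : ∀ X ∈ stateSpace n d, F X ≤ c + e * H X) :
    expec n d π F ≤ c + e * expec n d π H := by
  unfold expec
  calc ∑ X ∈ stateSpace n d, π X * F X
      ≤ ∑ X ∈ stateSpace n d, π X * (c + e * H X) :=
        Finset.sum_le_sum fun X hX => mul_le_mul_of_nonneg_left (hpt X hX) (hprob.1 X)
    _ = c * ∑ X ∈ stateSpace n d, π X + e * ∑ X ∈ stateSpace n d, π X * H X := by
        rw [Finset.mul_sum, Finset.mul_sum, ← Finset.sum_add_distrib]
        exact Finset.sum_congr rfl fun X _ => by ring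
    _ = c + e * ∑ X ∈ stateSpace n d, π X * H X := by rw [hprob.2.1, mul_one]


/-- Lemma 4: if `λ = 1 − β·n^{−α} ≥ 0` with `α ∈ [0,1)` and `0 < β ≤ 2·n^α`, then for
every stationary distribution `π` of the greedy limited-access chain,
`E[(1 − A_d(X))·(λ − d·x_d)] ≤ λ·d·k^d·(1 − β/(2·n^α))^{k−d}
  + d·E[(∑_{i=1}^d x_i)·1(q₁ > 1 − β/(2·n^α))]`. -/
theorem stmt13 (n d k : ℕ) (hd : 1 ≤ d) (hdk : d ≤ k) (hkn : k ≤ n) (α β lam : ℝ)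
    (hα0 : 0 ≤ α) (hα1 : α < 1) (hβ0 : 0 < β) (hβ2 : β ≤ 2 * (n : ℝ) ^ α)
    (hlam : lam = 1 - β * (n : ℝ) ^ (-α)) (hlam0 : 0 ≤ lam)
    (π : (Fin (d + 1) → ℕ) → ℝ)
    (hprob : IsProbOn n d π) (hstat : IsStationaryLim n d k lam π) :
    expec n d π
        (fun X => (1 - Asamp n d k X d) * (lam - d * (X (Fin.last d) : ℝ) / n)) ≤
      lam * d * (k : ℝ) ^ d * (1 - β / (2 * (n : ℝ) ^ α)) ^ (k - d) +
        d * expec n d π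
          (fun X => ((jobs d X : ℝ) / n) *
            (if 1 - β / (2 * (n : ℝ) ^ α) < (busy d X : ℝ) / n then (1 : ℝ) else 0)) := by
  have hk1 : 1 ≤ k := le_trans hd hdk
  have hn0 : 0 < n := lt_of_lt_of_le hk1 hkn
  have hnR : (0 : ℝ) < n := by exact_mod_cast hn0
  have hpα : (0 : ℝ) < (n : ℝ) ^ α := Real.rpow_pos_of_pos hnR α
  set t : ℝ := 1 - β / (2 * (n : ℝ) ^ α) with htdef
  have ht0 : 0 ≤ t := by
    have h1 : β / (2 * (n : ℝ) ^ α) ≤ 1 := by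
      rw [div_le_one (by positivity)]; exact hβ2
    simp only [htdef]; linarith
  have hlamt : lam ≤ t := by
    have h1 : (n : ℝ) ^ (-α) = ((n : ℝ) ^ α)⁻¹ := Real.rpow_neg (le_of_lt hnR) α
    have h2 : β / (2 * (n : ℝ) ^ α) ≤ β / (n : ℝ) ^ α := by
      apply div_le_div_of_nonneg_left hβ0.le hpα
      linarith
    rw [hlam, htdef, h1]
    rw [div_eq_mul_inv β ((n:ℝ) ^ α)] at h2
    linarith
  set C : ℝ := lam * d * (k : ℝ) ^ d * t ^ (k - d) with hCdef
  have hC0 : 0 ≤ C := by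
    have := pow_nonneg ht0 (k - d)
    rw [hCdef]; positivity
  clear_value t C
  refine expec_le_const_add hprob ?_
  intro X hX
  have hB : busy d X ≤ n := by
    simp only [stateSpace, Finset.mem_filter] at hX
    exact hX.2.1
  have hq0 : (0 : ℝ) ≤ (busy d X : ℝ) / n := by positivity
  have hq1 : (busy d X : ℝ) / n ≤ 1 := by
    rw [div_le_one hnR]; exact_mod_cast hB
  have h1A : 1 - Asamp n d k X d =
      ∑ j ∈ Finset.range d,
        ((n - busy d X).choose j * (busy d X).choose (k - j) : ℝ) / (n.choose k : ℝ) := by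
    simp only [Asamp, lt_irrefl d, if_false, sub_sub_cancel]
  set S : ℝ := ∑ j ∈ Finset.range d,
      ((n - busy d X).choose j * (busy d X).choose (k - j) : ℝ) / (n.choose k : ℝ) with hSdef
  have hS0 : 0 ≤ S := Finset.sum_nonneg fun j _ => by positivity
  have hS1 : S ≤ 1 := by
    have hcR : (0 : ℝ) < (n.choose k : ℝ) := by exact_mod_cast Nat.choose_pos hkn
    rw [hSdef, ← Finset.sum_div, div_le_one hcR]
    exact_mod_cast vander_sum_le n k d (busy d X) hdk hB
  have hSb : S ≤ d * ((k : ℝ) ^ d * ((busy d X : ℝ) / n) ^ (k - d)) := by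
    calc S ≤ ∑ _j ∈ Finset.range d, (k : ℝ) ^ d * ((busy d X : ℝ) / n) ^ (k - d) :=
          Finset.sum_le_sum fun j hj =>
            asamp_real_bound n k j d (busy d X) (Finset.mem_range.mp hj) hdk hkn hk1 hB
      _ = d * ((k : ℝ) ^ d * ((busy d X : ℝ) / n) ^ (k - d)) := by
          rw [Finset.sum_const, Finset.card_range, nsmul_eq_mul]
  have hx0 : (0 : ℝ) ≤ d * (X (Fin.last d) : ℝ) / n := by positivity
  rw [h1A]
  have hjn : (0 : ℝ) ≤ (jobs d X : ℝ) / n := by positivity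
  rcases le_or_gt ((busy d X : ℝ) / n) t with hcase | hcase
  · rw [if_neg (not_lt.mpr hcase), mul_zero, mul_zero, add_zero]
    have l1 : S * (lam - d * (X (Fin.last d) : ℝ) / n) ≤ S * lam :=
      mul_le_mul_of_nonneg_left (by linarith) hS0
    have l2 : S * lam ≤ (d * ((k : ℝ) ^ d * ((busy d X : ℝ) / n) ^ (k - d))) * lam :=
      mul_le_mul_of_nonneg_right hSb hlam0
    have l3 : ((busy d X : ℝ) / n) ^ (k - d) ≤ t ^ (k - d) := pow_le_pow_left₀ hq0 hcase _
    have l4 : (d * ((k : ℝ) ^ d * ((busy d X : ℝ) / n) ^ (k - d))) * lam ≤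
        (d * ((k : ℝ) ^ d * t ^ (k - d))) * lam := by
      apply mul_le_mul_of_nonneg_right _ hlam0
      apply mul_le_mul_of_nonneg_left _ (by positivity)
      apply mul_le_mul_of_nonneg_left l3 (by positivity)
    have l5 : (d * ((k : ℝ) ^ d * t ^ (k - d))) * lam = C := by rw [hCdef]; ring
    linarith
  · rw [if_pos hcase, mul_one]
    have hBj : (busy d X : ℝ) ≤ d * (jobs d X : ℝ) := by
      exact_mod_cast busy_le_jobs d X
    have hq' : (busy d X : ℝ) / n ≤ (d : ℝ) * ((jobs d X : ℝ) / n) := by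
      rw [← mul_div_assoc]
      gcongr
    rcases le_or_gt (lam - d * (X (Fin.last d) : ℝ) / n) 0 with hneg | hpos
    · have hnp : S * (lam - d * (X (Fin.last d) : ℝ) / n) ≤ 0 :=
        mul_nonpos_of_nonneg_of_nonpos hS0 hneg
      have : (0 : ℝ) ≤ (d : ℝ) * ((jobs d X : ℝ) / n) := by positivity
      linarith
    · have l1 : S * (lam - d * (X (Fin.last d) : ℝ) / n) ≤
          1 * (lam - d * (X (Fin.last d) : ℝ) / n) :=
        mul_le_mul_of_nonneg_right hS1 hpos.le
      linarith
end

section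
/- Let δ > 0 and define the Lyapunov function V_2 : S → ℝ by V_2(X) := (Σ_{i=1}^d X_i/n)·1(q_1 > λ + δ), where q_1 = B(X)/n. Then for every state X of the greedy limited-access chain satisfying q_1 > λ + δ + d/n, the generator drift satisfies G V_2(X) ≤ −δ. (Lemma 5, drift part, with the precise condition q_1 > λ + δ + d/n ensuring the indicator is unchanged by any single transition.) -/
open Finset

/-!
Every transition changes the number of busy servers by at most `d`, so when
`q₁ > λ + δ + d/n` the indicator in `V₂` equals `1` at `X` and at all its neighbours, and
`G V₂(X)` is the drift of `∑ᵢ Xᵢ / n`. Each arrival adds a job and each of the `B(X)` busy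
servers finishes at rate one, removing a job, so this drift is
`λ · ∑_{i ≥ 1} Aᵢ(X) − q₁ ≤ λ − q₁ < −δ`.
-/

section Transitions

variable {d : ℕ}

lemma busy_add (X Y : Fin (d + 1) → ℕ) : busy d (X + Y) = busy d X + busy d Y := by
  simp only [busy, Pi.add_apply, mul_add, sum_add_distrib]

lemma busy_single (i : Fin (d + 1)) : busy d (Pi.single i 1) = i := by
  simp [busy, Pi.single_apply]

lemma jobs_add (X Y : Fin (d + 1) → ℕ) : jobs d (X + Y) = jobs d X + jobs d Y := by
  simp only [jobs, Pi.add_apply, ← sum_add_distrib, ite_add_ite, add_zero]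

lemma jobs_single {i : Fin (d + 1)} (hi : i.1 ≠ 0) : jobs d (Pi.single i 1) = 1 := by
  simp only [jobs, Pi.single_apply]
  rw [sum_eq_single i (fun j _ hj => by simp [hj]) (by simp)]
  simp [Nat.pos_of_ne_zero hi]

lemma sub_single_add_single {X : Fin (d + 1) → ℕ} {i : Fin (d + 1)} (hXi : X i ≠ 0) :
    X - Pi.single i 1 + Pi.single i 1 = X := by
  funext j
  rcases eq_or_ne j i with rfl | hji
  · simp only [Pi.add_apply, Pi.sub_apply, Pi.single_eq_same]
    omega
  · simp [hji]

lemma sub_single_of_eq_zero {X : Fin (d + 1) → ℕ} {i : Fin (d + 1)} (hXi : X i = 0) :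
    X - Pi.single i 1 = X := by
  funext j
  rcases eq_or_ne j i with rfl | hji
  · simp [hXi]
  · simp [hji]

lemma busy_le_busy_sub_single_add (X : Fin (d + 1) → ℕ) (i : Fin (d + 1)) :
    busy d X ≤ busy d (X - Pi.single i 1) + i := by
  by_cases hXi : X i = 0
  · rw [sub_single_of_eq_zero hXi]
    omega
  · conv_lhs => rw [← sub_single_add_single hXi]
    rw [busy_add, busy_single]

lemma jobs_sub_single {X : Fin (d + 1) → ℕ} {i : Fin (d + 1)} (hi : i.1 ≠ 0) (hXi : X i ≠ 0) :
    (jobs d (X - Pi.single i 1) : ℝ) = jobs d X - 1 := by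
  conv_rhs => rw [← sub_single_add_single hXi]
  rw [jobs_add, jobs_single hi]
  push_cast
  ring

end Transitions

lemma sum_Asamp_le_one (n d k : ℕ) (X : Fin (d + 1) → ℕ) :
    ∑ i : Fin (d + 1), (if i.1 = 0 then 0 else Asamp n d k X i.1) ≤ 1 := by
  rw [Fin.sum_univ_eq_sum_range (fun i => if i = 0 then 0 else Asamp n d k X i), sum_range_succ]
  rcases Nat.eq_zero_or_pos d with rfl | hd
  · simp
  have hlow : ∑ i ∈ range d, (if i = 0 then 0 else Asamp n d k X i) ≤
      ∑ j ∈ range d,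
        ((n - busy d X).choose j * (busy d X).choose (k - j) : ℝ) / (n.choose k : ℝ) := by
    refine sum_le_sum fun i hi => ?_
    rw [Asamp, if_pos (mem_range.mp hi)]
    split_ifs
    · positivity
    · rfl
  rw [if_neg hd.ne', Asamp, if_neg (lt_irrefl d)]
  linarith

lemma Glim_congr {n d k : ℕ} {lam : ℝ} {f g : (Fin (d + 1) → ℕ) → ℝ} {X : Fin (d + 1) → ℕ}
    (hX : f X = g X) (hadd : ∀ i, f (X + Pi.single i 1) = g (X + Pi.single i 1))
    (hsub : ∀ i, f (X - Pi.single i 1) = g (X - Pi.single i 1)) :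
    Glim n d k lam f X = Glim n d k lam g X := by
  simp only [Glim, hX, hadd, hsub]

lemma Glim_jobs_div {n : ℕ} (hn : n ≠ 0) (d k : ℕ) (lam : ℝ) (X : Fin (d + 1) → ℕ) :
    Glim n d k lam (fun Y => (jobs d Y : ℝ) / n) X =
      lam * ∑ i : Fin (d + 1), (if i.1 = 0 then 0 else Asamp n d k X i.1) -
        (busy d X : ℝ) / n := by
  have harrival : ∀ i : Fin (d + 1),
      (if i.1 = 0 then 0 else Asamp n d k X i.1) *
          ((jobs d (X + Pi.single i 1) : ℝ) / n - (jobs d X : ℝ) / n) =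
        (if i.1 = 0 then 0 else Asamp n d k X i.1) / n := by
    intro i
    split_ifs with hi
    · simp
    · rw [jobs_add, jobs_single hi]
      push_cast
      ring
  have hdeparture : ∀ i : Fin (d + 1),
      (i.1 * X i : ℝ) * ((jobs d (X - Pi.single i 1) : ℝ) / n - (jobs d X : ℝ) / n) =
        -(i.1 * X i : ℝ) / n := by
    intro i
    by_cases hi : i.1 = 0
    · simp [hi]
    by_cases hXi : X i = 0
    · simp [hXi]
    rw [jobs_sub_single hi hXi]
    ring
  simp only [Glim, harrival, hdeparture, ← sum_div, sum_neg_distrib, busy, Nat.cast_sum,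
    Nat.cast_mul]
  field_simp
  ring

theorem stmt14_general (n d k : ℕ) (lam δ : ℝ)
    (hlam0 : 0 ≤ lam) (hδ : 0 < δ) :
    ∀ X ∈ stateSpace n d, lam + δ + d / n < (busy d X : ℝ) / n →
      Glim n d k lam
          (fun Y => ((jobs d Y : ℝ) / n) *
            (if lam + δ < (busy d Y : ℝ) / n then (1 : ℝ) else 0)) X ≤ -δ := by
  intro X _ hq
  have hn : n ≠ 0 := by
    rintro rfl
    simp only [Nat.cast_zero, div_zero] at hq
    linarith
  have hnear : ∀ Y, busy d X ≤ busy d Y + d →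
      (jobs d Y : ℝ) / n * (if lam + δ < (busy d Y : ℝ) / n then 1 else 0) =
        (jobs d Y : ℝ) / n := by
    intro Y hY
    have hbusy : (busy d X : ℝ) / n ≤ (busy d Y : ℝ) / n + d / n := by
      rw [← add_div]
      gcongr
      exact_mod_cast hY
    rw [if_pos (by linarith), mul_one]
  rw [Glim_congr (g := fun Y => (jobs d Y : ℝ) / n) (hnear X (by omega))
      (fun i => hnear (X + Pi.single i 1) (by rw [busy_add]; omega))
      (fun i => hnear (X - Pi.single i 1) (by have := busy_le_busy_sub_single_add X i; omega)),
    Glim_jobs_div hn]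
  have hrate := mul_le_mul_of_nonneg_left (sum_Asamp_le_one n d k X) hlam0
  have hdn : (0 : ℝ) ≤ d / n := by positivity
  linarith

/-- Lemma 5, drift part: for `δ > 0` and the Lyapunov function
`V₂(X) = (∑_{i=1}^d X_i/n)·1(q₁ > λ + δ)`, every state `X` of the greedy limited-access
chain with `q₁ > λ + δ + d/n` satisfies `G V₂(X) ≤ −δ`. -/
theorem stmt14 (n d k : ℕ) (hd : 1 ≤ d) (hdk : d ≤ k) (hkn : k ≤ n) (lam δ : ℝ)
    (hlam0 : 0 ≤ lam) (hlam1 : lam ≤ 1) (hδ : 0 < δ) :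
    ∀ X ∈ stateSpace n d, lam + δ + d / n < (busy d X : ℝ) / n →
      Glim n d k lam
          (fun Y => ((jobs d Y : ℝ) / n) *
            (if lam + δ < (busy d Y : ℝ) / n then (1 : ℝ) else 0)) X ≤ -δ :=
  stmt14_general n d k lam δ hlam0 hδ
end
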